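/- arXiv:2007.10883 — 7 statements merged into one kernel-verified Lean document; each statement's English description precedes it below -/
import Mathlib

section
/- Let X be a compact metric space, f : X → X continuous, and A ⊆ X an invariant set (f(A) ⊆ A). If the α-limit set of a point x (the set of accumulation points of all preimage sequences of x) intersects the interior of A, then x ∈ A. In particular, if the special α-limit set of x intersects the interior of A, then x ∈ A. -/
open Filter Topology Set

/-- A backward orbit branch of `x`: `u 0 = x` and `f (u (n+1)) = u n`. -/
def IsBackwardBranch {X : Type*} (f : X → X) (x : X) (u : ℕ → X) : Prop :=
  u 0 = x ∧ ∀ n, f (u (n + 1)) = u n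

/-- The special α-limit set of `x`: accumulation points of backward orbit branches. -/
def sAlpha {X : Type*} [TopologicalSpace X] (f : X → X) (x : X) : Set X :=
  {y | ∃ u : ℕ → X, IsBackwardBranch f x u ∧ MapClusterPt y atTop u}

/-- The α-limit set of `x`: accumulation points of preimage sequences. -/
def alphaLimit {X : Type*} [TopologicalSpace X] (f : X → X) (x : X) : Set X :=
  {y | ∃ u : ℕ → X, (∀ n, f^[n] (u n) = x) ∧ MapClusterPt y atTop u}

theorem IsBackwardBranch.iterate_apply {X : Type*} {f : X → X} {x : X} {u : ℕ → X}
    (hu : IsBackwardBranch f x u) (n : ℕ) : f^[n] (u n) = x := by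
  induction n with
  | zero => exact hu.1
  | succ k ih => rw [Function.iterate_succ_apply, hu.2 k, ih]

theorem sAlpha_subset_alphaLimit {X : Type*} [TopologicalSpace X] (f : X → X) (x : X) :
    sAlpha f x ⊆ alphaLimit f x :=
  fun _ ⟨u, hu, hcl⟩ => ⟨u, hu.iterate_apply, hcl⟩

theorem mem_of_alphaLimit_inter_interior_nonempty {X : Type*} [TopologicalSpace X]
    {f : X → X} {A : Set X} (hA : MapsTo f A A) {x : X}
    (h : (alphaLimit f x ∩ interior A).Nonempty) : x ∈ A := by
  obtain ⟨y, ⟨u, hu, hcl⟩, hyA⟩ := h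
  obtain ⟨n, hn⟩ := (hcl.frequently (isOpen_interior.mem_nhds hyA)).exists
  exact hu n ▸ hA.iterate n (interior_subset hn)

theorem stmt0_general {X : Type*} [MetricSpace X] (f : X → X)
    (A : Set X) (hA : f '' A ⊆ A) (x : X) :
    ((alphaLimit f x ∩ interior A).Nonempty → x ∈ A) ∧
    ((sAlpha f x ∩ interior A).Nonempty → x ∈ A) := by
  have hmaps : MapsTo f A A := mapsTo_iff_image_subset.mpr hA
  exact ⟨mem_of_alphaLimit_inter_interior_nonempty hmaps, fun h =>
    mem_of_alphaLimit_inter_interior_nonempty hmaps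
      (h.mono (inter_subset_inter_left _ (sAlpha_subset_alphaLimit f x)))⟩

theorem stmt0 {X : Type*} [MetricSpace X] [CompactSpace X] (f : X → X) (hf : Continuous f)
    (A : Set X) (hA : f '' A ⊆ A) (x : X) :
    ((alphaLimit f x ∩ interior A).Nonempty → x ∈ A) ∧
    ((sAlpha f x ∩ interior A).Nonempty → x ∈ A) :=
  stmt0_general f A hA x
end

section
/- Let f : [0,1] → [0,1] be continuous and suppose there exist three distinct points x₁, x₂, x₃ ∈ [0,1] with sα(x₁) = sα(x₂) = sα(x₃) = [0,1]. Then f is topologically transitive on [0,1]. -/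
open Filter Topology Set

/-!
If `f` is not transitive, the orbit of some nonempty open `U` has a closure missing an open
set. A full point `x` (one with `sα(x) = [0,1]`) lies twice in the orbit of a small interval
`C ⊆ U`, at times `s < s + p`; so the sets `f^[s + q p] C` form a chain, and the orbit of `C` is
a finite union of intervals. Its closure `K` is a closed invariant set with finite boundary,
nonempty interior and nonempty complement. Since a backward branch of `x` accumulates on every
point of `Kᶜ` and can never re-enter `K`, the set `closure Kᶜ` is invariant as well. Hence
`E = closure (interior K)` and `F = closure Eᶜ` are invariant, cover `[0,1]`, meet in a finite
set `P`, and every full point lies in `P`.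

Cut `[0,1]` at the points of `P`. Each piece lies in `E` or in `F`, so `f` maps it into a piece;
as `f` is onto, the induced map on pieces is injective and preserves adjacency, so it maps the
two end pieces to end pieces. Every full point lies in an iterated image of the interior of
the left end piece, hence in an end piece, so it is one of the two inner endpoints of the end
pieces. Thus there are at most two full points.
-/

namespace SpecialAlphaLimit

section Dynamics

variable {X : Type*}

theorem IsBackwardBranch.iterate_apply {f : X → X} {x : X} {u : ℕ → X}
    (hu : IsBackwardBranch f x u) (m k : ℕ) : f^[k] (u (m + k)) = u m := by
  induction k with
  | zero => rfl
  | succ k ih => rw [Function.iterate_succ_apply, ← add_assoc, hu.2, ih]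

variable (f : X → X)

def forwardOrbit (W : Set X) : Set X := ⋃ n, f^[n] '' W

theorem mapsTo_forwardOrbit (W : Set X) : MapsTo f (forwardOrbit f W) (forwardOrbit f W) := by
  rintro _ ⟨_, ⟨n, rfl⟩, w, hw, rfl⟩
  exact mem_iUnion.2 ⟨n + 1, w, hw, Function.iterate_succ_apply' f n w⟩

theorem forwardOrbit_mono {W W' : Set X} (h : W ⊆ W') : forwardOrbit f W ⊆ forwardOrbit f W' :=
  iUnion_mono fun _ => image_mono h

theorem subset_forwardOrbit (W : Set X) : W ⊆ forwardOrbit f W :=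
  fun w hw => mem_iUnion.2 ⟨0, w, hw, rfl⟩

theorem forwardOrbit_eq_union (C : Set X) {s p : ℕ} (hp : 0 < p) :
    forwardOrbit f C = (⋃ r ∈ Iio s, f^[r] '' C) ∪
      ⋃ r ∈ Iio p, f^[r] '' ⋃ q, f^[s + q * p] '' C := by
  ext y
  simp only [forwardOrbit, mem_union, mem_iUnion, mem_Iio, mem_image, exists_prop]
  constructor
  · rintro ⟨n, c, hc, rfl⟩
    by_cases hn : n < s
    · exact Or.inl ⟨n, hn, c, hc, rfl⟩
    · have hdiv := Nat.mod_add_div' (n - s) p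
      refine Or.inr ⟨(n - s) % p, Nat.mod_lt _ hp, _, ⟨(n - s) / p, c, hc, rfl⟩, ?_⟩
      rw [← Function.iterate_add_apply]
      congr 1
      omega
  · rintro (⟨r, -, c, hc, rfl⟩ | ⟨r, -, _, ⟨q, c, hc, rfl⟩, rfl⟩)
    · exact ⟨r, c, hc, rfl⟩
    · exact ⟨r + (s + q * p), c, hc, Function.iterate_add_apply f _ _ c⟩

end Dynamics

section Topology

variable {X : Type*} [TopologicalSpace X] {f : X → X} {x : X}

theorem frequently_mem_iterate_image (hs : sAlpha f x = univ) {W : Set X} (hW : IsOpen W)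
    (hne : W.Nonempty) : ∃ᶠ n in atTop, x ∈ f^[n] '' W := by
  obtain ⟨y, hy⟩ := hne
  obtain ⟨u, hu, hc⟩ : y ∈ sAlpha f x := hs ▸ mem_univ y
  refine (hc.frequently (hW.mem_nhds hy)).mono fun n hn => ⟨u n, hn, ?_⟩
  simpa [hu.1] using IsBackwardBranch.iterate_apply hu 0 n

theorem mem_of_mapsTo_of_interior_nonempty (hs : sAlpha f x = univ) {K : Set X}
    (hK : MapsTo f K K) (hint : (interior K).Nonempty) : x ∈ K := by
  obtain ⟨n, y, hy, rfl⟩ := (frequently_mem_iterate_image hs isOpen_interior hint).exists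
  exact hK.iterate n (interior_subset hy)

theorem surjective_of_sAlpha_eq_univ [CompactSpace X] [T2Space X] (hf : Continuous f)
    (hs : sAlpha f x = univ) : Function.Surjective f := by
  intro y
  obtain ⟨u, hu, hc⟩ : y ∈ sAlpha f x := hs ▸ mem_univ y
  have hmem : y ∈ closure (range f) :=
    hc.mem_closure_of_mem _ (mem_map.2 (univ_mem' fun n => ⟨u (n + 1), hu.2 n⟩))
  rwa [(isCompact_range hf).isClosed.closure_eq] at hmem

theorem mapsTo_closure_compl (hf : Continuous f) (hs : sAlpha f x = univ) {K : Set X}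
    (hK : IsClosed K) (hKf : MapsTo f K K) : MapsTo f (closure Kᶜ) (closure Kᶜ) := by
  refine MapsTo.closure_left (fun y hy => ?_) hf isClosed_closure
  obtain ⟨u, hu, hc⟩ : y ∈ sAlpha f x := hs ▸ mem_univ y
  obtain ⟨n₀, -, hn₀⟩ := frequently_atTop.mp (hc.frequently (hK.isOpen_compl.mem_nhds hy)) 0
  -- once the branch leaves the invariant set `K` it never comes back
  have hout : ∀ k, u (n₀ + k) ∉ K := fun k hk =>
    hn₀ (IsBackwardBranch.iterate_apply hu n₀ k ▸ hKf.iterate k hk)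
  refine (hc.continuousAt_comp hf.continuousAt).mem_closure_of_mem _ (mem_map.2 ?_)
  filter_upwards [eventually_ge_atTop (n₀ + 1)] with n hn
  obtain ⟨k, rfl⟩ := Nat.exists_eq_add_of_le hn
  simpa [Nat.add_right_comm n₀ 1 k, hu.2] using hout k

end Topology

theorem _root_.IsPreconnected.finite_frontier {α : Type*} [LinearOrder α] [TopologicalSpace α]
    [OrderTopology α] {s : Set α} (hs : IsPreconnected s) : (frontier s).Finite := by
  have hsub : frontier s ⊆ {y | IsGLB s y} ∪ {y | IsLUB s y} := by
    rintro y ⟨hcl, hint⟩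
    by_contra h
    rw [mem_union, not_or] at h
    obtain ⟨a, ha, hay⟩ : ∃ a ∈ s, a < y := by
      by_contra! h'
      exact h.1 (isGLB_of_mem_closure h' hcl)
    obtain ⟨b, hb, hyb⟩ : ∃ b ∈ s, y < b := by
      by_contra! h'
      exact h.2 (isLUB_of_mem_closure h' hcl)
    exact hint (mem_interior.2 ⟨Ioo a b, Ioo_subset_Icc_self.trans (hs.Icc_subset ha hb),
      isOpen_Ioo, hay, hyb⟩)
  refine (Subsingleton.finite ?_).union (Subsingleton.finite ?_) |>.subset hsub
  · exact fun a ha b hb => IsGLB.unique ha hb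
  · exact fun a ha b hb => IsLUB.unique ha hb

theorem _root_.Set.Finite.finite_frontier_biUnion {X ι : Type*} [TopologicalSpace X]
    {t : Set ι} (ht : t.Finite) {A : ι → Set X} (h : ∀ i ∈ t, (frontier (A i)).Finite) :
    (frontier (⋃ i ∈ t, A i)).Finite := by
  refine (ht.biUnion h).subset fun y ⟨hcl, hint⟩ => ?_
  rw [ht.closure_biUnion] at hcl
  obtain ⟨i, hi, hyi⟩ := mem_iUnion₂.1 hcl
  exact mem_iUnion₂.2 ⟨i, hi, hyi, fun h' => hint (interior_mono (subset_biUnion_of_mem hi) h')⟩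

theorem finite_frontier_forwardOrbit {α : Type*} [LinearOrder α] [TopologicalSpace α]
    [OrderTopology α] {f : α → α} (hf : Continuous f) {C : Set α} (hC : IsPreconnected C)
    {s p : ℕ} (hp : 0 < p) (hmeet : (f^[s] '' C ∩ f^[s + p] '' C).Nonempty) :
    (frontier (forwardOrbit f C)).Finite := by
  have himage : ∀ n, IsPreconnected (f^[n] '' C) := fun n =>
    hC.image _ (hf.iterate n).continuousOn
  obtain ⟨y, hy, hy'⟩ := hmeet
  have hchain : ∀ q, (f^[s + q * p] '' C ∩ f^[s + (q + 1) * p] '' C).Nonempty := fun q => by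
    refine ⟨f^[q * p] y, ?_, ?_⟩
    · rw [show s + q * p = q * p + s by ring, Function.iterate_add, image_comp]
      exact mem_image_of_mem _ hy
    · rw [show s + (q + 1) * p = q * p + (s + p) by ring, Function.iterate_add, image_comp]
      exact mem_image_of_mem _ hy'
  have hJ : IsPreconnected (⋃ q, f^[s + q * p] '' C) :=
    IsPreconnected.iUnion_of_chain (fun q => himage _) hchain
  have h₁ := (finite_Iio s).finite_frontier_biUnion fun r _ => (himage r).finite_frontier
  have h₂ := (finite_Iio p).finite_frontier_biUnion fun r _ =>
    (hJ.image _ (hf.iterate r).continuousOn).finite_frontier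
  rw [forwardOrbit_eq_union f C (s := s) hp]
  exact ((h₁.subset inter_subset_left).union (h₂.subset inter_subset_right)).subset
    (frontier_union_subset _ _)

theorem exists_invariant_finite_frontier {α : Type*} [ConditionallyCompleteLinearOrder α]
    [DenselyOrdered α] [TopologicalSpace α] [OrderTopology α] {f : α → α} (hf : Continuous f)
    {x : α} (hs : sAlpha f x = univ) {U : Set α} (hU : IsOpen U) (hne : U.Nonempty) :
    ∃ K, IsClosed K ∧ MapsTo f K K ∧ (frontier K).Finite ∧ (interior K).Nonempty ∧
      K ⊆ closure (forwardOrbit f U) := by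
  obtain ⟨z, hz⟩ := hne
  obtain ⟨a, b, -, hnhds, hCU⟩ := exists_Icc_mem_subset_of_mem_nhds (hU.mem_nhds hz)
  have hint : (interior (Icc a b)).Nonempty := ⟨z, mem_interior_iff_mem_nhds.2 hnhds⟩
  have hfreq := frequently_mem_iterate_image hs isOpen_interior hint
  obtain ⟨s, -, hxs⟩ := frequently_atTop.mp hfreq 0
  obtain ⟨t, hst, hxt⟩ := frequently_atTop.mp hfreq (s + 1)
  have hmeet : (f^[s] '' Icc a b ∩ f^[s + (t - s)] '' Icc a b).Nonempty := by
    rw [Nat.add_sub_cancel' (by omega)]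
    exact ⟨x, image_mono interior_subset hxs, image_mono interior_subset hxt⟩
  refine ⟨closure (forwardOrbit f (Icc a b)), isClosed_closure,
    (mapsTo_forwardOrbit f _).closure hf, ?_, ?_, closure_mono (forwardOrbit_mono f hCU)⟩
  · exact (finite_frontier_forwardOrbit hf isPreconnected_Icc (by omega) hmeet).subset
      frontier_closure_subset
  · exact hint.mono (interior_mono ((subset_forwardOrbit f _).trans subset_closure))

structure InvariantSplitting {X : Type*} [TopologicalSpace X] (f : X → X) (E F : Set X) :
    Prop where
  isClosed_left : IsClosed E
  isClosed_right : IsClosed F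
  mapsTo_left : MapsTo f E E
  mapsTo_right : MapsTo f F F
  union_eq_univ : E ∪ F = univ
  disjoint_interior_left : Disjoint (interior E) F
  disjoint_interior_right : Disjoint E (interior F)
  finite_inter : (E ∩ F).Finite

theorem exists_invariantSplitting {X : Type*} [TopologicalSpace X] {f : X → X} {x : X}
    (hf : Continuous f) (hs : sAlpha f x = univ) {K : Set X} (hK : IsClosed K)
    (hKf : MapsTo f K K) (hfin : (frontier K).Finite) (hint : (interior K).Nonempty)
    (hext : Kᶜ.Nonempty) :
    ∃ E F, InvariantSplitting f E F ∧ (interior E).Nonempty ∧ (interior F).Nonempty := by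
  set E := closure (interior K)
  have hEf : MapsTo f E E := by
    simpa [E, closure_compl] using
      mapsTo_closure_compl hf hs isClosed_closure (mapsTo_closure_compl hf hs hK hKf)
  have hreg : E ⊆ closure (interior E) :=
    closure_mono (interior_maximal subset_closure isOpen_interior)
  have hEK : E ⊆ K := closure_minimal interior_subset hK
  refine ⟨E, closure Eᶜ, ⟨isClosed_closure, isClosed_closure, hEf,
    mapsTo_closure_compl hf hs isClosed_closure hEf, ?_, ?_, ?_, ?_⟩, ?_, ?_⟩
  · exact eq_univ_of_forall fun y => (em (y ∈ E)).imp id fun h => subset_closure h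
  · rw [closure_compl]
    exact disjoint_compl_right
  · rw [closure_compl, interior_compl]
    exact disjoint_compl_right.mono_left hreg
  · have hfr : E ∩ closure Eᶜ = frontier E := by
      rw [frontier_eq_closure_inter_closure, isClosed_closure.closure_eq]
    rw [hfr]
    exact hfin.subset (frontier_closure_subset.trans frontier_interior_subset)
  · exact hint.mono (interior_maximal subset_closure isOpen_interior)
  · exact (hext.mono (compl_subset_compl.2 hEK)).mono
      (interior_maximal subset_closure isClosed_closure.isOpen_compl)

theorem eq_zero_or_eq_last_of_injective_of_adjacent {n : ℕ} {τ : Fin (n + 1) → Fin (n + 1)}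
    (hinj : Function.Injective τ)
    (hadj : ∀ k l : Fin (n + 1), (k : ℕ) + 1 = l → (τ k : ℕ) ≤ τ l + 1 ∧ (τ l : ℕ) ≤ τ k + 1)
    {e : Fin (n + 1)} (he : e = 0 ∨ e = Fin.last n) : τ e = 0 ∨ τ e = Fin.last n := by
  classical
  by_contra h
  set M := Finset.univ.filter fun k : Fin (n + 1) => k ≠ 0 ∧ k ≠ Fin.last n
  have hne : ∀ a b : Fin (n + 1), (a : ℕ) ≠ b → (τ a : ℕ) ≠ τ b :=
    fun a b hab h => hab (congrArg Fin.val (hinj (Fin.ext h)))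
  -- an inner vertex has two distinct neighbours, so its image cannot be an endpoint
  have hM : ∀ k ∈ M, τ k ∈ M := by
    intro k hk
    simp only [M, Finset.mem_filter, Finset.mem_univ, true_and, ne_eq, Fin.ext_iff,
      Fin.val_zero, Fin.val_last] at hk ⊢
    set prev : Fin (n + 1) := ⟨k - 1, by omega⟩
    set next : Fin (n + 1) := ⟨k + 1, by omega⟩
    have h₁ := hadj prev k (by simp only [prev]; omega)
    have h₂ := hadj k next rfl
    have h₃ := hne prev next (by simp only [prev, next]; omega)
    have h₄ := hne prev k (by simp only [prev]; omega)
    have h₅ := hne next k (by simp only [next]; omega)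
    have := (τ k).isLt
    have := (τ next).isLt
    omega
  have heM : e ∉ M := fun hm => by
    obtain ⟨h0, hl⟩ := (Finset.mem_filter.1 hm).2
    exact he.elim h0 hl
  have hτe : τ e ∈ M := Finset.mem_filter.2 ⟨Finset.mem_univ _, not_or.1 h⟩
  obtain ⟨a, -, b, -, hab, hτ⟩ := Finset.exists_ne_map_eq_of_card_lt_of_maps_to
    (s := insert e M) (t := M) (by rw [Finset.card_insert_of_notMem heM]; omega)
    (fun k hk => (Finset.mem_insert.1 hk).elim (fun h => h ▸ hτe) (hM k))
  exact hab (hinj hτ)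

open unitInterval

theorem exists_orderEmbedding_range_eq {s : Set I} (hs : s.Finite) (h0 : 0 ∈ s) (h1 : 1 ∈ s) :
    ∃ (n : ℕ) (q : Fin (n + 2) ↪o I), q 0 = 0 ∧ q (Fin.last (n + 1)) = 1 ∧ range q = s := by
  classical
  obtain ⟨n, hn⟩ : ∃ n, hs.toFinset.card = n + 2 := Nat.exists_eq_add_of_le' <|
    Finset.one_lt_card.2 ⟨0, by simpa, 1, by simpa, zero_ne_one⟩
  set q := hs.toFinset.orderEmbOfFin hn
  have hrange : range q = s := by simp [q, Finset.range_orderEmbOfFin]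
  refine ⟨n, q, ?_, ?_, hrange⟩
  · obtain ⟨i, hi⟩ : (0 : I) ∈ range q := hrange ▸ h0
    exact le_antisymm (hi ▸ q.monotone (Fin.zero_le i)) nonneg'
  · obtain ⟨i, hi⟩ : (1 : I) ∈ range q := hrange ▸ h1
    exact le_antisymm le_one' (hi ▸ q.monotone (Fin.le_last i))

variable {n : ℕ} (q : Fin (n + 2) ↪o I)

def piece (k : Fin (n + 1)) : Set I := Icc (q k.castSucc) (q k.succ)

variable {q}

theorem notMem_Ioo_piece (i : Fin (n + 2)) (k : Fin (n + 1)) :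
    q i ∉ Ioo (q k.castSucc) (q k.succ) := by
  rintro ⟨h₁, h₂⟩
  rw [q.lt_iff_lt, Fin.lt_def] at h₁ h₂
  simp only [Fin.val_castSucc, Fin.val_succ] at h₁ h₂
  omega

theorem eq_of_mem_piece_of_mem_Ioo {y : I} {k j : Fin (n + 1)} (hk : y ∈ piece q k)
    (hj : y ∈ Ioo (q j.castSucc) (q j.succ)) : k = j := by
  rcases lt_trichotomy k j with h | rfl | h
  · have : q k.succ ≤ q j.castSucc := q.le_iff_le.2 (Fin.succ_le_castSucc_iff.2 h)
    exact absurd (hk.2.trans this) (not_le.2 hj.1)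
  · rfl
  · have : q j.succ ≤ q k.castSucc := q.le_iff_le.2 (Fin.succ_le_castSucc_iff.2 h)
    exact absurd (hj.2.trans_le (this.trans hk.1)) (lt_irrefl y)

theorem val_le_succ_of_mem_piece {y : I} {k j : Fin (n + 1)} (hk : y ∈ piece q k)
    (hj : y ∈ piece q j) : (k : ℕ) ≤ j + 1 := by
  by_contra! h
  have : q j.succ < q k.castSucc := q.lt_iff_lt.2 <| by
    rw [Fin.lt_def, Fin.val_succ, Fin.val_castSucc]
    omega
  exact absurd (hk.1.trans hj.2) (not_le.2 this)

theorem exists_subset_piece (hq0 : q 0 = 0) (hq1 : q (Fin.last (n + 1)) = 1) {T : Set I}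
    (hinner : ∀ i, ∀ a ∈ T, ∀ b ∈ T, a < q i → q i < b → False) : ∃ k, T ⊆ piece q k := by
  classical
  set S := Finset.univ.filter fun i : Fin (n + 2) => T ⊆ Iic (q i)
  have hS : S.Nonempty :=
    ⟨Fin.last (n + 1), Finset.mem_filter.2 ⟨Finset.mem_univ _, fun t _ => hq1 ▸ le_one'⟩⟩
  have hmin : T ⊆ Iic (q (S.min' hS)) := (Finset.mem_filter.1 (S.min'_mem hS)).2
  rcases Fin.eq_zero_or_eq_succ (S.min' hS) with h | ⟨k, hk⟩
  · refine ⟨0, fun t ht => ⟨?_, (hmin ht).trans ?_⟩⟩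
    · simp [hq0]
    · exact q.monotone (by rw [h]; exact Fin.zero_le _)
  · refine ⟨k, fun t ht => ⟨?_, hk ▸ hmin ht⟩⟩
    obtain ⟨b, hb, hkb⟩ : ∃ b ∈ T, q k.castSucc < b := by
      by_contra! h'
      have := S.min'_le k.castSucc (Finset.mem_filter.2 ⟨Finset.mem_univ _, h'⟩)
      rw [hk, Fin.le_def] at this
      simp at this
    by_contra! htk
    exact hinner _ t ht b hb htk hkb

theorem piece_zero : piece q 0 = Icc (q 0) (q 1) := by
  simp [piece]

theorem piece_last :
    piece q (Fin.last n) = Icc (q (Fin.last n).castSucc) (q (Fin.last (n + 1))) := by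
  simp [piece]

variable {f : I → I}

theorem surjective_of_image_piece_subset (hq0 : q 0 = 0) (hq1 : q (Fin.last (n + 1)) = 1)
    (hsurj : Function.Surjective f) {τ : Fin (n + 1) → Fin (n + 1)}
    (hτ : ∀ k, f '' piece q k ⊆ piece q (τ k)) : Function.Surjective τ := by
  intro j
  obtain ⟨y, hy⟩ := nonempty_Ioo.2 (q.lt_iff_lt.2 Fin.castSucc_lt_succ)
  obtain ⟨z, rfl⟩ := hsurj y
  obtain ⟨k, hk⟩ := exists_subset_piece hq0 hq1 (T := {z}) fun i a ha b hb hai hib => by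
    rw [mem_singleton_iff] at ha hb
    exact (hai.trans hib).ne (ha.trans hb.symm)
  exact ⟨k, eq_of_mem_piece_of_mem_Ioo (hτ k (mem_image_of_mem f (hk rfl))) hy⟩

theorem adjacent_of_image_piece_subset {τ : Fin (n + 1) → Fin (n + 1)}
    (hτ : ∀ k, f '' piece q k ⊆ piece q (τ k)) (k l : Fin (n + 1)) (hkl : (k : ℕ) + 1 = l) :
    (τ k : ℕ) ≤ τ l + 1 ∧ (τ l : ℕ) ≤ τ k + 1 := by
  have hpt : k.succ = l.castSucc := Fin.ext (by simp [hkl])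
  have h₁ : f (q k.succ) ∈ piece q (τ k) :=
    hτ k (mem_image_of_mem f ⟨q.monotone Fin.castSucc_lt_succ.le, le_rfl⟩)
  have h₂ : f (q k.succ) ∈ piece q (τ l) :=
    hτ l (mem_image_of_mem f ⟨hpt ▸ le_rfl, hpt ▸ q.monotone Fin.castSucc_lt_succ.le⟩)
  exact ⟨val_le_succ_of_mem_piece h₁ h₂, val_le_succ_of_mem_piece h₂ h₁⟩

namespace InvariantSplitting

variable {E F : Set I} (hs : InvariantSplitting f E F)
include hs

theorem piece_subset_or (hrange : range q = insert 0 (insert 1 (E ∩ F))) (k : Fin (n + 1)) :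
    piece q k ⊆ E ∨ piece q k ⊆ F := by
  have hlt : q k.castSucc < q k.succ := q.lt_iff_lt.2 Fin.castSucc_lt_succ
  have hEF : Ioo (q k.castSucc) (q k.succ) ∩ (E ∩ F) = ∅ := by
    refine eq_empty_of_forall_notMem fun y ⟨hy, hyEF⟩ => ?_
    obtain ⟨i, rfl⟩ : y ∈ range q := hrange ▸ mem_insert_of_mem _ (mem_insert_of_mem _ hyEF)
    exact notMem_Ioo_piece i k hy
  have hcover : Ioo (q k.castSucc) (q k.succ) ⊆ E ∪ F := hs.union_eq_univ ▸ subset_univ _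
  have key := isPreconnected_closed_iff.1 isPreconnected_Ioo E F hs.isClosed_left
    hs.isClosed_right hcover
  rw [piece, ← closure_Ioo hlt.ne, hs.isClosed_left.closure_subset_iff,
    hs.isClosed_right.closure_subset_iff]
  rcases (Ioo (q k.castSucc) (q k.succ) ∩ E).eq_empty_or_nonempty with hE | hE
  · exact Or.inr fun y hy => (hcover hy).resolve_left fun h => hE.subset ⟨hy, h⟩
  rcases (Ioo (q k.castSucc) (q k.succ) ∩ F).eq_empty_or_nonempty with hF | hF
  · exact Or.inl fun y hy => (hcover hy).resolve_right fun h => hF.subset ⟨hy, h⟩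
  exact absurd hEF (key hE hF).ne_empty

theorem exists_invariant_superset_piece (hrange : range q = insert 0 (insert 1 (E ∩ F)))
    (k : Fin (n + 1)) :
    ∃ G, piece q k ⊆ G ∧ MapsTo f G G ∧ Disjoint (interior G) (E ∩ F) :=
  (hs.piece_subset_or hrange k).elim
    (fun h => ⟨E, h, hs.mapsTo_left, hs.disjoint_interior_left.mono_right inter_subset_right⟩)
    (fun h => ⟨F, h, hs.mapsTo_right,
      hs.disjoint_interior_right.symm.mono_right inter_subset_left⟩)

theorem notMem_of_mem_interior_piece (hrange : range q = insert 0 (insert 1 (E ∩ F)))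
    {k : Fin (n + 1)} {y : I} (hy : y ∈ interior (piece q k)) : y ∉ E ∩ F := by
  obtain ⟨G, hG, -, hGd⟩ := hs.exists_invariant_superset_piece hrange k
  exact disjoint_left.1 hGd (interior_mono hG hy)

theorem exists_image_piece_subset (hf : Continuous f) (hq0 : q 0 = 0)
    (hq1 : q (Fin.last (n + 1)) = 1) (hrange : range q = insert 0 (insert 1 (E ∩ F)))
    (k : Fin (n + 1)) : ∃ j, f '' piece q k ⊆ piece q j := by
  obtain ⟨G, hG, hGf, hGd⟩ := hs.exists_invariant_superset_piece hrange k
  have hT : IsPreconnected (f '' piece q k) := isPreconnected_Icc.image _ hf.continuousOn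
  refine exists_subset_piece hq0 hq1 fun i a ha b hb hai hib => ?_
  have hint : q i ∈ interior G := mem_interior.2 ⟨Ioo a b,
    Ioo_subset_Icc_self.trans ((hT.Icc_subset ha hb).trans ((hGf.mono_left hG).image_subset)),
    isOpen_Ioo, hai, hib⟩
  rcases (hrange ▸ mem_range_self i : q i ∈ insert 0 (insert 1 (E ∩ F))) with h | h | h
  · exact not_lt.2 unitInterval.nonneg' (h ▸ hai)
  · exact not_lt.2 unitInterval.le_one' (h ▸ hib)
  · exact disjoint_left.1 hGd hint h

theorem eq_of_mem_end_piece (hq0 : q 0 = 0) (hq1 : q (Fin.last (n + 1)) = 1)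
    (hrange : range q = insert 0 (insert 1 (E ∩ F))) {y : I} (hy : y ∈ E ∩ F)
    (hend : y ∈ piece q 0 ∪ piece q (Fin.last n)) :
    y = q 1 ∨ y = q (Fin.last n).castSucc := by
  obtain ⟨i, rfl⟩ : y ∈ range q := hrange ▸ mem_insert_of_mem _ (mem_insert_of_mem _ hy)
  have h0 : q 0 ∈ interior (piece q 0) := by
    refine mem_interior.2 ⟨Iio (q 1), fun z hz => ?_, isOpen_Iio, q.lt_iff_lt.2 zero_lt_one⟩
    rw [piece_zero, hq0]
    exact ⟨unitInterval.nonneg', hz.le⟩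
  have h1 : q (Fin.last (n + 1)) ∈ interior (piece q (Fin.last n)) := by
    refine mem_interior.2 ⟨Ioi (q (Fin.last n).castSucc), fun z hz => ?_, isOpen_Ioi,
      q.lt_iff_lt.2 (Fin.castSucc_lt_last _)⟩
    rw [piece_last, hq1]
    exact ⟨hz.le, unitInterval.le_one'⟩
  have hi0 : i ≠ 0 := fun h => hs.notMem_of_mem_interior_piece hrange h0 (h ▸ hy)
  have hi1 : i ≠ Fin.last (n + 1) := fun h => hs.notMem_of_mem_interior_piece hrange h1 (h ▸ hy)
  rw [piece_zero, piece_last] at hend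
  simp only [ne_eq, Fin.ext_iff, Fin.val_zero, Fin.val_last] at hi0 hi1
  rcases hend with ⟨-, h⟩ | ⟨h, -⟩
  · rw [q.le_iff_le, Fin.le_def, Fin.val_one] at h
    exact Or.inl (congrArg q (Fin.ext (by rw [Fin.val_one]; omega)))
  · rw [q.le_iff_le, Fin.le_def, Fin.val_castSucc, Fin.val_last] at h
    exact Or.inr (congrArg q (Fin.ext (by rw [Fin.val_castSucc, Fin.val_last]; omega)))

theorem exists_pair_of_forall_mem_iterate_image (hf : Continuous f)
    (hsurj : Function.Surjective f) :
    ∃ a b : I, ∀ y ∈ E ∩ F, (∀ W : Set I, IsOpen W → W.Nonempty → ∃ m, y ∈ f^[m] '' W) →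
      y = a ∨ y = b := by
  obtain ⟨n, q, hq0, hq1, hrange⟩ := exists_orderEmbedding_range_eq
    ((hs.finite_inter.insert 1).insert 0) (mem_insert _ _) (mem_insert_of_mem _ (mem_insert _ _))
  choose τ hτ using hs.exists_image_piece_subset hf hq0 hq1 hrange
  have hinj : Function.Injective τ :=
    Finite.injective_iff_surjective.2 (surjective_of_image_piece_subset hq0 hq1 hsurj hτ)
  set T := piece q 0 ∪ piece q (Fin.last n)
  have hend : ∀ e, e = 0 ∨ e = Fin.last n → MapsTo f (piece q e) T := fun e he y hy => by
    rcases eq_zero_or_eq_last_of_injective_of_adjacent hinj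
      (adjacent_of_image_piece_subset hτ) he with h | h
    · exact Or.inl (h ▸ hτ e (mem_image_of_mem f hy))
    · exact Or.inr (h ▸ hτ e (mem_image_of_mem f hy))
  have hT : MapsTo f T T := (hend 0 (Or.inl rfl)).union (hend _ (Or.inr rfl))
  refine ⟨q 1, q (Fin.last n).castSucc, fun y hy hreach => ?_⟩
  obtain ⟨m, w, hw, rfl⟩ := hreach (Ioo (q 0) (q 1)) isOpen_Ioo
    (nonempty_Ioo.2 (q.lt_iff_lt.2 zero_lt_one))
  refine hs.eq_of_mem_end_piece hq0 hq1 hrange hy (hT.iterate m (Or.inl ?_))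
  exact piece_zero ▸ Ioo_subset_Icc_self hw

end InvariantSplitting

end SpecialAlphaLimit

open SpecialAlphaLimit in
theorem stmt3 (f : unitInterval → unitInterval) (hf : Continuous f)
    (x₁ x₂ x₃ : unitInterval) (h12 : x₁ ≠ x₂) (h13 : x₁ ≠ x₃) (h23 : x₂ ≠ x₃)
    (hs1 : sAlpha f x₁ = Set.univ) (hs2 : sAlpha f x₂ = Set.univ)
    (hs3 : sAlpha f x₃ = Set.univ) :
    ∀ U V : Set unitInterval, IsOpen U → IsOpen V → U.Nonempty → V.Nonempty →
      ∃ n : ℕ, (f^[n] '' U ∩ V).Nonempty := by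
  intro U V hU hV hUne hVne
  by_contra! hUV
  obtain ⟨K, hK, hKf, hfin, hint, hKU⟩ := exists_invariant_finite_frontier hf hs1 hU hUne
  have hext : Kᶜ.Nonempty := by
    obtain ⟨v, hv⟩ := hVne
    refine ⟨v, fun hvK => ?_⟩
    obtain ⟨w, hwV, hw⟩ := mem_closure_iff_nhds.1 (hKU hvK) V (hV.mem_nhds hv)
    obtain ⟨m, hm⟩ := mem_iUnion.1 hw
    exact (hUV m).subset ⟨hm, hwV⟩
  obtain ⟨E, F, hEF, hE, hF⟩ := exists_invariantSplitting hf hs1 hK hKf hfin hint hext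
  obtain ⟨a, b, hab⟩ :=
    hEF.exists_pair_of_forall_mem_iterate_image hf (surjective_of_sAlpha_eq_univ hf hs1)
  have hfull : ∀ y, sAlpha f y = univ → y = a ∨ y = b := fun y hy =>
    hab y ⟨mem_of_mapsTo_of_interior_nonempty hy hEF.mapsTo_left hE,
      mem_of_mapsTo_of_interior_nonempty hy hEF.mapsTo_right hF⟩
      fun W hW hWne => (frequently_mem_iterate_image hy hW hWne).exists
  rcases hfull x₁ hs1 with rfl | rfl <;> rcases hfull x₂ hs2 with rfl | rfl <;>
    rcases hfull x₃ hs3 with rfl | rfl <;> contradiction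
end

section
/- Let f : [0,1] → [0,1] be continuous. If N is a weak cycle of intervals of period n for f, M is a transitive cycle of intervals of period m for f, and N ∩ M is a nonempty finite set, then N ∩ M is a single periodic orbit of f contained in the set of endpoints of the connected components of M, and n ≤ 2m. -/
open Filter Topology Set

/-- A cycle of intervals of period `k` for an interval map `f`. -/
def IsIntervalCycle (f : unitInterval → unitInterval) (M : Set unitInterval) (k : ℕ) : Prop :=
  1 ≤ k ∧ ∃ K : Set unitInterval,
    (∃ a b : unitInterval, a < b ∧ K = Set.Icc a b) ∧
    (∀ i j, i < k → j < k → i ≠ j → Disjoint (f^[i] '' K) (f^[j] '' K)) ∧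
    f^[k] '' K = K ∧
    M = ⋃ i ∈ Finset.range k, f^[i] '' K

/-- Topological transitivity of `f` restricted to an invariant set `M`. -/
def TransitiveOn {X : Type*} [TopologicalSpace X] (f : X → X) (M : Set X) : Prop :=
  Set.MapsTo f M M ∧
    ∀ U V : Set X, IsOpen U → IsOpen V → (U ∩ M).Nonempty → (V ∩ M).Nonempty →
      ∃ n : ℕ, (f^[n] '' (U ∩ M) ∩ V).Nonempty

/-- A transitive cycle of intervals. -/
def IsTransitiveCycle (f : unitInterval → unitInterval) (M : Set unitInterval) (k : ℕ) : Prop :=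
  IsIntervalCycle f M k ∧ TransitiveOn f M

/-- A weak cycle of intervals of period `n`. -/
def IsWeakCycle (f : unitInterval → unitInterval) (N : Set unitInterval) (n : ℕ) : Prop :=
  1 ≤ n ∧ ∃ B : Set unitInterval,
    (∀ i, i < n → (f^[i] '' B).OrdConnected ∧ (f^[i] '' B).Nontrivial) ∧
    (∀ i j, i < n → j < n → i ≠ j → Disjoint (f^[i] '' B) (f^[j] '' B)) ∧
    f^[n] '' B ⊆ B ∧
    N = ⋃ i ∈ Finset.range n, f^[i] '' B

/-- Endpoints of the connected components of `M`. -/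
def EndPts (M : Set unitInterval) : Set unitInterval :=
  {x | x ∈ M ∧ (IsGreatest (connectedComponentIn M x) x ∨ IsLeast (connectedComponentIn M x) x)}

/-!
The components `B_i` of `N` and `K_j` of `M` are intervals, so each finite `B_i ∩ K_j` has at most
one point. Hence every `x ∈ N ∩ M` returns to its own `B_i ∩ K_j` after `lcm n m` steps, and its
period is a multiple of both `n` and `m`. Since the nondegenerate interval `B_i` meets `K_j` only
at `x`, the point `x` is an end of `K_j` (and of its component in `M`), so `N ∩ M` has at most `2m`
points, and symmetrically at most `2n`. The orbit of `x` therefore gives `n ≤ 2m`, and a second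
orbit in `N ∩ M` would give `m ≤ n` and two points `u_i < v_i` of `N ∩ M` in every `B_i`. Then
`u_i` is the right end of some `K_{a(i)}` and `v_i` the left end of some `K_{b(i)}`; the map `a` is
injective and misses `b(i₀)` for the largest `u_{i₀}`, so `n < m`.
-/

open Function

section Order

variable {α : Type*} [LinearOrder α] {s I C : Set α} {x y : α}

theorem Set.OrdConnected.subsingleton_of_finite [DenselyOrdered α] (hs : s.OrdConnected)
    (hfin : s.Finite) : s.Subsingleton := by
  intro x hx y hy
  by_contra hxy
  rcases lt_or_gt_of_ne hxy with h | h
  · exact Icc_infinite h (hfin.subset (hs.out hx hy))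
  · exact Icc_infinite h (hfin.subset (hs.out hy hx))

theorem isGreatest_of_inter_subsingleton (hI : I.OrdConnected) (hC : C.OrdConnected)
    (hsub : (I ∩ C).Subsingleton) (hxI : x ∈ I) (hxC : x ∈ C) (hyI : y ∈ I) (hxy : x < y) :
    IsGreatest C x := by
  refine ⟨hxC, fun z hz => le_of_not_gt fun hxz => ?_⟩
  have hw : min y z ∈ I ∩ C :=
    ⟨hI.out hxI hyI ⟨le_min hxy.le hxz.le, min_le_left _ _⟩,
      hC.out hxC hz ⟨le_min hxy.le hxz.le, min_le_right _ _⟩⟩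
  exact (lt_min hxy hxz).ne (hsub ⟨hxI, hxC⟩ hw)

theorem isLeast_of_inter_subsingleton (hI : I.OrdConnected) (hC : C.OrdConnected)
    (hsub : (I ∩ C).Subsingleton) (hxI : x ∈ I) (hxC : x ∈ C) (hyI : y ∈ I) (hyx : y < x) :
    IsLeast C x := by
  refine ⟨hxC, fun z hz => le_of_not_gt fun hzx => ?_⟩
  have hw : max y z ∈ I ∩ C :=
    ⟨hI.out hyI hxI ⟨le_max_left _ _, max_le hyx.le hzx.le⟩,
      hC.out hz hxC ⟨le_max_right _ _, max_le hyx.le hzx.le⟩⟩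
  exact (max_lt hyx hzx).ne (hsub hw ⟨hxI, hxC⟩)

theorem isGreatest_or_isLeast_of_inter_subsingleton (hI : I.OrdConnected) (hC : C.OrdConnected)
    (hIn : I.Nontrivial) (hsub : (I ∩ C).Subsingleton) (hxI : x ∈ I) (hxC : x ∈ C) :
    IsGreatest C x ∨ IsLeast C x := by
  obtain ⟨y, hyI, hyx⟩ := hIn.exists_ne x
  rcases hyx.lt_or_gt with h | h
  · exact .inr (isLeast_of_inter_subsingleton hI hC hsub hxI hxC hyI h)
  · exact .inl (isGreatest_of_inter_subsingleton hI hC hsub hxI hxC hyI h)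

theorem encard_setOf_isGreatest_or_isLeast_le (s : Set α) :
    {x | IsGreatest s x ∨ IsLeast s x}.encard ≤ 2 := by
  rw [ofPred_or]
  calc _ ≤ {x | IsGreatest s x}.encard + {x | IsLeast s x}.encard := encard_union_le _ _
    _ ≤ 1 + 1 := add_le_add (encard_le_one_iff.2 fun _ _ ha hb => ha.unique hb)
        (encard_le_one_iff.2 fun _ _ ha hb => ha.unique hb)
    _ = 2 := one_add_one_eq_two

end Order

section PeriodicOrbit

variable {α : Type*} {f : α → α} {x y : α}

theorem Function.range_iterate_eq_image_Iio (hx : x ∈ periodicPts f) :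
    range (f^[·] x) = (f^[·] x) '' Iio (minimalPeriod f x) := by
  refine Subset.antisymm ?_ (image_subset_range _ _)
  rintro _ ⟨t, rfl⟩
  exact ⟨t % minimalPeriod f x, Nat.mod_lt _ (minimalPeriod_pos_of_mem_periodicPts hx),
    iterate_mod_minimalPeriod_eq⟩

theorem Function.encard_range_iterate (hx : x ∈ periodicPts f) :
    (range (f^[·] x)).encard = minimalPeriod f x := by
  rw [range_iterate_eq_image_Iio hx, iterate_injOn_Iio_minimalPeriod.encard_image,
    ← Finset.coe_range, encard_coe_eq_coe_finsetCard, Finset.card_range]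

theorem Function.disjoint_range_iterate (hy : y ∈ periodicPts f) (hxy : y ∉ range (f^[·] x)) :
    Disjoint (range (f^[·] x)) (range (f^[·] y)) := by
  rw [disjoint_left]
  rintro _ ⟨s, rfl⟩ ⟨t, hts⟩
  obtain ⟨k, hk, hper⟩ := hy
  refine hxy ⟨(k - 1) * t + s, ?_⟩
  have hkt : (k - 1) * t + t = k * t := by
    rw [Nat.sub_one_mul, Nat.sub_add_cancel (Nat.le_mul_of_pos_left t hk)]
  dsimp only at hts ⊢
  rw [iterate_add_apply, ← hts, ← iterate_add_apply, hkt]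
  exact (hper.mul_const t).eq

end PeriodicOrbit

/-- `B` is the base of a weak cycle of intervals `Orb(B) = orb f B n` of period `n`. -/
structure IsWeakCycleBase {α : Type*} [LinearOrder α] (f : α → α) (B : Set α) (n : ℕ) :
    Prop where
  pos : 0 < n
  ordConnected : ∀ i < n, (f^[i] '' B).OrdConnected
  nontrivial : ∀ i < n, (f^[i] '' B).Nontrivial
  pairwise_disjoint : ∀ i j, i < n → j < n → i ≠ j → Disjoint (f^[i] '' B) (f^[j] '' B)
  image_iterate_subset : f^[n] '' B ⊆ B

def orb {α : Type*} (f : α → α) (B : Set α) (n : ℕ) : Set α :=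
  ⋃ i ∈ Finset.range n, f^[i] '' B

section Orb

variable {α : Type*} {f : α → α} {B : Set α} {n i : ℕ} {x : α}

theorem mem_orb : x ∈ orb f B n ↔ ∃ i < n, x ∈ f^[i] '' B := by
  simp [orb]

theorem image_iterate_subset_orb (hi : i < n) : f^[i] '' B ⊆ orb f B n :=
  fun _ hx => mem_orb.2 ⟨i, hi, hx⟩

end Orb

namespace IsWeakCycleBase

variable {α : Type*} [LinearOrder α] {f : α → α} {B : Set α} {n i j t : ℕ} {x : α}

theorem image_iterate_subset_mod (h : IsWeakCycleBase f B n) (k : ℕ) :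
    f^[k] '' B ⊆ f^[k % n] '' B := by
  induction k using Nat.strong_induction_on with
  | _ k ih =>
    rcases lt_or_ge k n with hk | hk
    · rw [Nat.mod_eq_of_lt hk]
    · calc f^[k] '' B = f^[k - n] '' (f^[n] '' B) := by
            rw [← image_comp, ← iterate_add, Nat.sub_add_cancel hk]
        _ ⊆ f^[k - n] '' B := image_mono h.image_iterate_subset
        _ ⊆ f^[(k - n) % n] '' B := ih _ (Nat.sub_lt (h.pos.trans_le hk) h.pos)
        _ = f^[k % n] '' B := by rw [← Nat.mod_eq_sub_mod hk]

theorem iterate_mem_mod (h : IsWeakCycleBase f B n) (hx : x ∈ f^[i] '' B) (t : ℕ) :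
    f^[t] x ∈ f^[(i + t) % n] '' B := by
  refine h.image_iterate_subset_mod _ ?_
  rw [add_comm, iterate_add, image_comp]
  exact mem_image_of_mem _ hx

theorem eq_of_mem (h : IsWeakCycleBase f B n) (hi : i < n) (hj : j < n)
    (hxi : x ∈ f^[i] '' B) (hxj : x ∈ f^[j] '' B) : i = j := by
  by_contra hij
  exact (h.pairwise_disjoint i j hi hj hij).ne_of_mem hxi hxj rfl

theorem dvd_of_iterate_mem (h : IsWeakCycleBase f B n) (hi : i < n) (hx : x ∈ f^[i] '' B)
    (ht : f^[t] x ∈ f^[i] '' B) : n ∣ t := by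
  have hmod := h.eq_of_mem (Nat.mod_lt _ h.pos) hi (h.iterate_mem_mod hx t) ht
  have : i + t ≡ i + 0 [MOD n] := by simpa [Nat.ModEq, Nat.mod_eq_of_lt hi] using hmod
  exact Nat.modEq_zero_iff_dvd.1 (Nat.ModEq.add_left_cancel' i this)

theorem iterate_mem_of_dvd (h : IsWeakCycleBase f B n) (hi : i < n) (hx : x ∈ f^[i] '' B)
    (ht : n ∣ t) : f^[t] x ∈ f^[i] '' B := by
  obtain ⟨c, rfl⟩ := ht
  simpa [Nat.add_mul_mod_self_left, Nat.mod_eq_of_lt hi] using h.iterate_mem_mod hx (n * c)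

theorem mapsTo_iterate (h : IsWeakCycleBase f B n) (t : ℕ) :
    MapsTo f^[t] (orb f B n) (orb f B n) := fun _ hx => by
  obtain ⟨i, hi, hxi⟩ := mem_orb.1 hx
  exact mem_orb.2 ⟨_, Nat.mod_lt _ h.pos, h.iterate_mem_mod hxi t⟩

theorem exists_iterate_mem (h : IsWeakCycleBase f B n) (hx : x ∈ orb f B n) (hj : j < n) :
    ∃ t, f^[t] x ∈ f^[j] '' B := by
  obtain ⟨i, hi, hxi⟩ := mem_orb.1 hx
  refine ⟨j + n - i, ?_⟩
  have := h.iterate_mem_mod hxi (j + n - i)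
  rwa [show i + (j + n - i) = j + n by omega, Nat.add_mod_right, Nat.mod_eq_of_lt hj] at this

theorem dvd_minimalPeriod (h : IsWeakCycleBase f B n) (hx : x ∈ orb f B n) :
    n ∣ minimalPeriod f x := by
  obtain ⟨i, hi, hxi⟩ := mem_orb.1 hx
  exact h.dvd_of_iterate_mem hi hxi (by rwa [iterate_minimalPeriod])

end IsWeakCycleBase

section Contact

variable {α : Type*} [LinearOrder α] [DenselyOrdered α] {f : α → α} {B K : Set α}
  {n m : ℕ} {x : α} (hB : IsWeakCycleBase f B n) (hK : IsWeakCycleBase f K m)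
  (hfin : (orb f B n ∩ orb f K m).Finite)
include hB hK hfin

theorem inter_image_iterate_subsingleton {i j : ℕ} (hi : i < n) (hj : j < m) :
    (f^[i] '' B ∩ f^[j] '' K).Subsingleton :=
  ((hB.ordConnected i hi).inter (hK.ordConnected j hj)).subsingleton_of_finite
    (hfin.subset (inter_subset_inter (image_iterate_subset_orb hi) (image_iterate_subset_orb hj)))

theorem isPeriodicPt_lcm (hx : x ∈ orb f B n ∩ orb f K m) : IsPeriodicPt f (n.lcm m) x := by
  obtain ⟨i, hi, hxi⟩ := mem_orb.1 hx.1
  obtain ⟨j, hj, hxj⟩ := mem_orb.1 hx.2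
  exact inter_image_iterate_subsingleton hB hK hfin hi hj
    ⟨hB.iterate_mem_of_dvd hi hxi (Nat.dvd_lcm_left n m),
      hK.iterate_mem_of_dvd hj hxj (Nat.dvd_lcm_right n m)⟩ ⟨hxi, hxj⟩

theorem mem_periodicPts_of_mem_inter (hx : x ∈ orb f B n ∩ orb f K m) : x ∈ periodicPts f :=
  mk_mem_periodicPts (Nat.lcm_pos hB.pos hK.pos) (isPeriodicPt_lcm hB hK hfin hx)

theorem encard_inter_le_two_mul : (orb f B n ∩ orb f K m).encard ≤ 2 * m := by
  set ends := fun j => {x | IsGreatest (f^[j] '' K) x ∨ IsLeast (f^[j] '' K) x}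
  have hsub : orb f B n ∩ orb f K m ⊆ ⋃ j ∈ Finset.range m, ends j := by
    rintro x ⟨hxB, hxK⟩
    obtain ⟨i, hi, hxi⟩ := mem_orb.1 hxB
    obtain ⟨j, hj, hxj⟩ := mem_orb.1 hxK
    exact mem_biUnion (Finset.mem_range.2 hj) <|
      isGreatest_or_isLeast_of_inter_subsingleton (hB.ordConnected i hi) (hK.ordConnected j hj)
        (hB.nontrivial i hi) (inter_image_iterate_subsingleton hB hK hfin hi hj) hxi hxj
  calc _ ≤ (⋃ j ∈ Finset.range m, ends j).encard := encard_le_encard hsub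
    _ ≤ ∑ j ∈ Finset.range m, (ends j).encard := Finset.set_encard_biUnion_le _ _
    _ ≤ ∑ _j ∈ Finset.range m, 2 := Finset.sum_le_sum fun j _ =>
        encard_setOf_isGreatest_or_isLeast_le _
    _ = 2 * m := by simp [mul_comm]

theorem exists_isGreatest_of_lt {i : ℕ} (hi : i < n) {u v : α}
    (hu : u ∈ f^[i] '' B ∩ (orb f B n ∩ orb f K m)) (hv : v ∈ f^[i] '' B) (huv : u < v) :
    ∃ j < m, IsGreatest (f^[j] '' K) u := by
  obtain ⟨j, hj, huj⟩ := mem_orb.1 hu.2.2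
  exact ⟨j, hj, isGreatest_of_inter_subsingleton (hB.ordConnected i hi) (hK.ordConnected j hj)
    (inter_image_iterate_subsingleton hB hK hfin hi hj) hu.1 huj hv huv⟩

theorem exists_isLeast_of_lt {i : ℕ} (hi : i < n) {u v : α} (hu : u ∈ f^[i] '' B)
    (hv : v ∈ f^[i] '' B ∩ (orb f B n ∩ orb f K m)) (huv : u < v) :
    ∃ j < m, IsLeast (f^[j] '' K) v := by
  obtain ⟨j, hj, hvj⟩ := mem_orb.1 hv.2.2
  exact ⟨j, hj, isLeast_of_inter_subsingleton (hB.ordConnected i hi) (hK.ordConnected j hj)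
    (inter_image_iterate_subsingleton hB hK hfin hi hj) hv.1 hvj hu huv⟩

theorem exists_inter_image_iterate_subsingleton (hmn : m ≤ n) :
    ∃ i < n, (f^[i] '' B ∩ (orb f B n ∩ orb f K m)).Subsingleton := by
  by_contra! hall
  have : Nonempty α := ⟨(hall 0 hB.pos).nonempty.some⟩
  have hpair : ∀ i < n, ∃ u ∈ f^[i] '' B ∩ (orb f B n ∩ orb f K m),
      ∃ v ∈ f^[i] '' B ∩ (orb f B n ∩ orb f K m), u < v :=
    fun i hi => (hall i hi).exists_lt
  choose! u hu v hv huv using hpair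
  choose! a ha hua using fun i hi =>
    exists_isGreatest_of_lt hB hK hfin hi (hu i hi) (hv i hi).1 (huv i hi)
  obtain ⟨i₀, hi₀, hmax⟩ :=
    (Finset.range n).exists_max_image u (Finset.nonempty_range_iff.2 hB.pos.ne')
  rw [Finset.mem_range] at hi₀
  obtain ⟨b, hb, hvb⟩ :=
    exists_isLeast_of_lt hB hK hfin hi₀ (hu i₀ hi₀).1 (hv i₀ hi₀) (huv i₀ hi₀)
  -- `v i₀` lies above every `u i`, so `K_b` is not the component `K_{a i}` ending at `u i`.
  have hmaps : ∀ i ∈ Finset.range n, a i ∈ (Finset.range m).erase b := fun i hi => by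
    rw [Finset.mem_range] at hi
    refine Finset.mem_erase.2 ⟨fun hab => ?_, Finset.mem_range.2 (ha i hi)⟩
    have : v i₀ ≤ u i := (hua i hi).2 (hab ▸ hvb.1)
    exact absurd (this.trans (hmax i (Finset.mem_range.2 hi))) (huv i₀ hi₀).not_ge
  have hinj : InjOn a (Finset.range n) := fun i hi i' hi' hai => by
    simp only [Finset.coe_range, mem_Iio] at hi hi'
    have : u i = u i' := (hua i hi).unique (hai ▸ hua i' hi')
    exact hB.eq_of_mem hi hi' (hu i hi).1 (this ▸ (hu i' hi').1)
  have hcard := Finset.card_le_card_of_injOn a hmaps hinj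
  rw [Finset.card_range, Finset.card_erase_of_mem (Finset.mem_range.2 hb), Finset.card_range]
    at hcard
  omega

theorem inter_eq_range_iterate (hx : x ∈ orb f B n ∩ orb f K m) :
    orb f B n ∩ orb f K m = range (f^[·] x) := by
  have hinv : ∀ t, ∀ y ∈ orb f B n ∩ orb f K m, f^[t] y ∈ orb f B n ∩ orb f K m :=
    fun t y hy => ⟨hB.mapsTo_iterate t hy.1, hK.mapsTo_iterate t hy.2⟩
  refine Subset.antisymm (fun y hy => ?_) (range_subset_iff.2 fun t => hinv t x hx)
  by_contra hyx
  have hxp := mem_periodicPts_of_mem_inter hB hK hfin hx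
  have hyp := mem_periodicPts_of_mem_inter hB hK hfin hy
  have hdisj := disjoint_range_iterate hyp hyx
  have hmn : m ≤ n := by
    have hcount : (minimalPeriod f x + minimalPeriod f y : ℕ∞) ≤ 2 * n := by
      rw [← encard_range_iterate hxp, ← encard_range_iterate hyp, ← encard_union_eq hdisj]
      calc _ ≤ (orb f B n ∩ orb f K m).encard := encard_le_encard <|
              union_subset (range_subset_iff.2 fun t => hinv t x hx)
                (range_subset_iff.2 fun t => hinv t y hy)
        _ ≤ 2 * n := by
          rw [inter_comm] at hfin ⊢
          exact encard_inter_le_two_mul hK hB hfin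
    have hmx := Nat.le_of_dvd (minimalPeriod_pos_of_mem_periodicPts hxp) (hK.dvd_minimalPeriod hx.2)
    have hmy := Nat.le_of_dvd (minimalPeriod_pos_of_mem_periodicPts hyp) (hK.dvd_minimalPeriod hy.2)
    norm_cast at hcount
    omega
  obtain ⟨i, hi, hsub⟩ := exists_inter_image_iterate_subsingleton hB hK hfin hmn
  obtain ⟨s, hs⟩ := hB.exists_iterate_mem hx.1 hi
  obtain ⟨t, ht⟩ := hB.exists_iterate_mem hy.1 hi
  exact disjoint_left.1 hdisj ⟨s, rfl⟩
    ⟨t, (hsub ⟨hs, hinv s x hx⟩ ⟨ht, hinv t y hy⟩).symm⟩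

end Contact

section UnitInterval

variable {f : unitInterval → unitInterval} {N M : Set unitInterval} {n m : ℕ}

theorem IsWeakCycle.exists_base (h : IsWeakCycle f N n) :
    ∃ B, IsWeakCycleBase f B n ∧ N = orb f B n := by
  obtain ⟨hn, B, hB, hdisj, hsub, rfl⟩ := h
  exact ⟨B, ⟨hn, fun i hi => (hB i hi).1, fun i hi => (hB i hi).2, hdisj, hsub⟩, rfl⟩

theorem IsIntervalCycle.exists_base (hf : Continuous f) (h : IsIntervalCycle f M m) :
    ∃ K, IsWeakCycleBase f K m ∧ M = orb f K m := by
  obtain ⟨hm, K, ⟨a, b, hab, rfl⟩, hdisj, hper, rfl⟩ := h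
  refine ⟨Icc a b, ⟨hm, fun j _ => ?_, fun j hj => ?_, hdisj, hper.subset⟩, rfl⟩
  · exact (isPreconnected_Icc.image _ (hf.iterate j).continuousOn).ordConnected
  · rw [← not_subsingleton_iff]
    intro hs
    have hK : f^[m - j] '' (f^[j] '' Icc a b) = Icc a b := by
      rw [← image_comp, ← iterate_add, Nat.sub_add_cancel hj.le, hper]
    exact hab.ne ((hK ▸ hs.image _) (left_mem_Icc.2 hab.le) (right_mem_Icc.2 hab.le))

theorem inter_subset_endPts {B : Set unitInterval} (hB : IsWeakCycleBase f B n)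
    (hfin : (orb f B n ∩ M).Finite) : orb f B n ∩ M ⊆ EndPts M := by
  rintro x ⟨hxN, hxM⟩
  obtain ⟨i, hi, hxi⟩ := mem_orb.1 hxN
  have hC : (connectedComponentIn M x).OrdConnected :=
    isPreconnected_connectedComponentIn.ordConnected
  refine ⟨hxM, isGreatest_or_isLeast_of_inter_subsingleton (hB.ordConnected i hi) hC
    (hB.nontrivial i hi) ?_ hxi (mem_connectedComponentIn hxM)⟩
  exact ((hB.ordConnected i hi).inter hC).subsingleton_of_finite (hfin.subset
    (inter_subset_inter (image_iterate_subset_orb hi) (connectedComponentIn_subset _ _)))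

end UnitInterval

theorem stmt5 (f : unitInterval → unitInterval) (hf : Continuous f)
    (N M : Set unitInterval) (n m : ℕ)
    (hN : IsWeakCycle f N n) (hM : IsTransitiveCycle f M m)
    (hne : (N ∩ M).Nonempty) (hfin : (N ∩ M).Finite) :
    (∃ (p : unitInterval) (k : ℕ), 1 ≤ k ∧ f^[k] p = p ∧
      (∀ i, 0 < i → i < k → f^[i] p ≠ p) ∧
      N ∩ M = {y | ∃ i < k, y = f^[i] p}) ∧
    N ∩ M ⊆ EndPts M ∧ n ≤ 2 * m := by
  obtain ⟨B, hB, rfl⟩ := hN.exists_base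
  obtain ⟨K, hK, rfl⟩ := hM.1.exists_base hf
  obtain ⟨p, hp⟩ := hne
  have hpp := mem_periodicPts_of_mem_inter hB hK hfin hp
  have horb := inter_eq_range_iterate hB hK hfin hp
  refine ⟨⟨p, minimalPeriod f p, minimalPeriod_pos_of_mem_periodicPts hpp,
    iterate_minimalPeriod,
    fun _ h0 hi => not_isPeriodicPt_of_pos_of_lt_minimalPeriod h0.ne' hi, ?_⟩,
    inter_subset_endPts hB hfin, ?_⟩
  · rw [horb, range_iterate_eq_image_Iio hpp]
    ext y
    simp [eq_comm]
  · have hcard : (minimalPeriod f p : ℕ∞) ≤ 2 * m := by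
      rw [← encard_range_iterate hpp, ← horb]
      exact encard_inter_le_two_mul hB hK hfin
    have hn := Nat.le_of_dvd (minimalPeriod_pos_of_mem_periodicPts hpp) (hB.dvd_minimalPeriod hp.1)
    norm_cast at hcard
    omega
end

section
/- Let f : [0,1] → [0,1] be continuous and let P be a periodic orbit of f. If the α-limit set α(y) of a point y intersects P, then sα(y) ⊇ P. -/
open Filter Topology Set

/-
Pigeonholing a preimage sequence of `y` modulo the period `k` yields a point `c` of the orbit `P`
which is fixed by `g = f^[k]` and is a limit of points `w` with `g^[n] w = y`, `n ≥ 1`. By the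
intermediate value theorem this upgrades to an interval `K ∋ y` all of whose points have
`g`-preimages in `K` arbitrarily close to `c`: if the preimages of `y` approach `c` from the side
of `y`, take `K = [y, c]`; if they approach from the other side and iterates of points just beyond
`c` overshoot some `H`, take `K = [y, H]`; otherwise the orbit of a preimage just beyond `c` has
to cross back over `c` in a small step, which produces preimages on the side of `y` after all.
Choosing preimages in `K` ever closer to `c` and concatenating the finite orbit segments between
them gives a backward branch of `y` accumulating at `c`. Finally `sα(y)` is forward invariant, as
`f` maps a backward branch to a shift of itself.
-/

open Function

section Basic

variable {X : Type*}

def strictBackwardOrbit (g : X → X) (y : X) : Set X :=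
  {w | ∃ n, 0 < n ∧ g^[n] w = y}

theorem strictBackwardOrbit_iterate_subset {g : X → X} {y : X} {k : ℕ} (hk : 0 < k) :
    strictBackwardOrbit g^[k] y ⊆ strictBackwardOrbit g y := by
  rintro w ⟨n, hn, hw⟩
  exact ⟨k * n, Nat.mul_pos hk hn, by rwa [iterate_mul]⟩

theorem notMem_strictBackwardOrbit_of_isFixedPt {g : X → X} {c y : X} (hc : IsFixedPt g c)
    (hyc : y ≠ c) : c ∉ strictBackwardOrbit g y := by
  rintro ⟨n, -, hn⟩
  exact hyc (by rw [← hn, iterate_fixed hc])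

theorem Nat.exists_lt_and_not_succ {p : ℕ → Prop} {n : ℕ} (h0 : p 0) (hn : ¬p n) :
    ∃ t < n, p t ∧ ¬p (t + 1) := by
  induction n with
  | zero => exact absurd h0 hn
  | succ n ih =>
    by_cases hpn : p n
    · exact ⟨n, n.lt_succ_self, hpn, hn⟩
    · obtain ⟨t, ht, hpt⟩ := ih hpn
      exact ⟨t, ht.trans n.lt_succ_self, hpt⟩

/-- The state `(z, j)` stands for the point `g^[j] z`. When `j = 0`, the next state
`next n z = (z', m)` is meant to satisfy `g^[m + 1] z' = z`, so that the points form a backward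
branch. -/
def backwardChain (next : ℕ → X → X × ℕ) (x₀ : X) : ℕ → X × ℕ
  | 0 => (x₀, 0)
  | n + 1 =>
    let s := backwardChain next x₀ n
    if s.2 = 0 then next n s.1 else (s.1, s.2 - 1)

theorem backwardChain_succ_of_snd_eq_zero {next : ℕ → X → X × ℕ} {x₀ : X} {n : ℕ}
    (h : (backwardChain next x₀ n).2 = 0) :
    backwardChain next x₀ (n + 1) = next n (backwardChain next x₀ n).1 := by
  rw [backwardChain, if_pos h]

theorem backwardChain_add {next : ℕ → X → X × ℕ} {x₀ : X} {n i : ℕ}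
    (hi : i ≤ (backwardChain next x₀ n).2) :
    backwardChain next x₀ (n + i) =
      ((backwardChain next x₀ n).1, (backwardChain next x₀ n).2 - i) := by
  induction i with
  | zero => rfl
  | succ i ih =>
    rw [← add_assoc, backwardChain, ih (by omega), if_neg (by simp only; omega)]
    rfl

end Basic

section Topology

variable {X : Type*} [TopologicalSpace X]

def PreimagesAccumulateAt (g : X → X) (K : Set X) (c : X) : Prop :=
  ∀ v ∈ K, ∃ᶠ z in 𝓝 c, z ∈ K ∧ z ∈ strictBackwardOrbit g v

theorem PreimagesAccumulateAt.of_iterate {g : X → X} {K : Set X} {c : X} {k : ℕ}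
    (h : PreimagesAccumulateAt g^[k] K c) (hk : 0 < k) : PreimagesAccumulateAt g K c :=
  fun v hv => (h v hv).mono fun _ hz => ⟨hz.1, strictBackwardOrbit_iterate_subset hk hz.2⟩

theorem PreimagesAccumulateAt.mem_sAlpha {g : X → X} {K : Set X} {c y : X}
    [(𝓝 c).IsCountablyGenerated] (h : PreimagesAccumulateAt g K c) (hy : y ∈ K) :
    c ∈ sAlpha g y := by
  obtain ⟨B, hB⟩ := (𝓝 c).exists_antitone_basis
  have hnext : ∀ (n : ℕ) (v : K), ∃ z : K × ℕ, ↑z.1 ∈ B n ∧ g^[z.2 + 1] z.1 = v := by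
    intro n v
    obtain ⟨z, ⟨hzK, m, hm, hz⟩, hzB⟩ := ((h v v.2).and_eventually (hB.mem n)).exists
    exact ⟨(⟨z, hzK⟩, m - 1), hzB, by rwa [Nat.sub_add_cancel hm]⟩
  choose next hnextB hnext using hnext
  refine ⟨fun n => g^[(backwardChain next ⟨y, hy⟩ n).2] (backwardChain next ⟨y, hy⟩ n).1,
    ⟨rfl, fun n => ?_⟩, ?_⟩
  · beta_reduce
    rcases hj : (backwardChain next ⟨y, hy⟩ n).2 with _ | j
    · rw [backwardChain_succ_of_snd_eq_zero hj, ← iterate_succ_apply' g, hnext,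
        iterate_zero_apply]
    · rw [backwardChain_add (i := 1) (by omega), hj, ← iterate_succ_apply' g]
      rfl
  · rw [hB.toHasBasis.mapClusterPt_iff_frequently]
    intro N _
    rw [frequently_atTop]
    intro a
    obtain ⟨n, hn, h0⟩ : ∃ n ≥ max a N, (backwardChain next ⟨y, hy⟩ n).2 = 0 :=
      ⟨_, le_self_add, by rw [backwardChain_add le_rfl, Nat.sub_self]⟩
    have hs1 := backwardChain_succ_of_snd_eq_zero h0
    refine ⟨n + 1 + (next n (backwardChain next ⟨y, hy⟩ n).1).2, by omega, ?_⟩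
    rw [backwardChain_add (by rw [hs1]), hs1, Nat.sub_self, iterate_zero_apply]
    exact hB.antitone (by omega) (hnextB n _)

theorem sAlpha_mapsTo {f : X → X} (hf : Continuous f) (y : X) :
    MapsTo f (sAlpha f y) (sAlpha f y) := by
  rintro x ⟨u, hu, hx⟩
  refine ⟨u, hu, ?_⟩
  have hshift : (f ∘ u) ∘ (· + 1) = u := funext hu.2
  rw [← hshift, mapClusterPt_comp, map_add_atTop_eq_nat]
  exact hx.continuousAt_comp hf.continuousAt

theorem MapClusterPt.exists_inf_principal {α ι : Type*} [Finite ι] {F : Filter α} {u : α → X}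
    {x : X} (h : MapClusterPt x F u) {S : ι → Set α} (hS : ∀ a, ∃ i, a ∈ S i) :
    ∃ i, MapClusterPt x (F ⊓ 𝓟 (S i)) u := by
  by_contra! hnot
  simp only [mapClusterPt_iff_frequently, not_forall, not_frequently, eventually_inf_principal]
    at hnot
  choose U hU hev using hnot
  obtain ⟨a, ha, hev'⟩ := ((mapClusterPt_iff_frequently.1 h _ (iInter_mem.2 hU)).and_eventually
    (eventually_all.2 hev)).exists
  obtain ⟨i, hi⟩ := hS a
  exact hev' i hi (mem_iInter.1 ha i)

theorem exists_iterate_mem_closure_strictBackwardOrbit {f : X → X} (hf : Continuous f) {k : ℕ}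
    (hk : 0 < k) {q y : X} (hq : q ∈ alphaLimit f y) :
    ∃ r, f^[r] q ∈ closure (strictBackwardOrbit f^[k] y) := by
  obtain ⟨u, hu, hq⟩ := hq
  obtain ⟨r, hr⟩ := hq.exists_inf_principal (S := fun r : Fin k => {n | n % k = r})
    fun n => ⟨⟨n % k, Nat.mod_lt n hk⟩, rfl⟩
  refine ⟨r, mem_closure_iff_clusterPt.2 <|
    ClusterPt.mono (hr.continuousAt_comp (hf.iterate r).continuousAt) (tendsto_principal.2 ?_)⟩
  filter_upwards [mem_inf_of_left (eventually_ge_atTop k), mem_inf_of_right (mem_principal_self _)]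
    with n hkn hnr
  refine ⟨n / k, Nat.div_pos hkn hk, ?_⟩
  rw [comp_apply, ← iterate_mul, ← iterate_add_apply, ← hnr, Nat.div_add_mod, hu]

end Topology

section LinearOrder

variable {X : Type*} [LinearOrder X] [TopologicalSpace X] [OrderTopology X]
  {g : X → X} {c y : X}

theorem frequently_nhdsLE_of_frequently_nhdsGE (hg : Continuous g) (hc : IsFixedPt g c)
    (hyc : y < c) (h : ∃ᶠ w in 𝓝[≥] c, w ∈ strictBackwardOrbit g y)
    (hbdd : ∀ H, c < H → ∀ᶠ z in 𝓝[≥] c, ∀ m, 0 < m → g^[m] z < H) :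
    ∃ᶠ w in 𝓝[≤] c, w ∈ strictBackwardOrbit g y := by
  obtain ⟨d, hcd⟩ : ∃ d, c < d := by
    obtain ⟨w, hw, hcw⟩ := (h.and_eventually self_mem_nhdsWithin).exists
    exact ⟨w, hcw.lt_of_ne fun hcw =>
      notMem_strictBackwardOrbit_of_isFixedPt hc hyc.ne (hcw ▸ hw)⟩
  rw [(nhdsLE_basis_of_exists_lt ⟨y, hyc⟩).frequently_iff]
  intro l hl
  obtain ⟨a, b, ⟨hac, hcb⟩, hab⟩ :=
    (mem_nhds_iff_exists_Ioo_subset' ⟨y, hyc⟩ ⟨d, hcd⟩).1 <|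
    hg.continuousAt.preimage_mem_nhds (Ioi_mem_nhds (show max l y < g c by
      rw [hc]; exact max_lt hl hyc))
  obtain ⟨w, ⟨n, hn, hwy⟩, hbw, hcw, hwb⟩ :=
    (h.and_eventually ((hbdd b hcb).and (Ico_mem_nhdsGE hcb))).exists
  -- the orbit of `w` stays below `b`, so it leaves the band `(a, b) ∋ c` downwards, and the step
  -- out of the band lands in `(max l y, a]`
  obtain ⟨t, htn, hat, hta⟩ :=
    Nat.exists_lt_and_not_succ (p := fun t => max a (max l y) < g^[t] w)
    (max_lt (hac.trans_le hcw) (max_lt (hl.trans_le hcw) (hyc.trans_le hcw)))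
    (by rw [hwy]; exact not_lt.2 (le_max_of_le_right (le_max_right _ _)))
  have hband : g^[t] w ∈ Ioo a b := by
    refine ⟨(le_max_left _ _).trans_lt hat, ?_⟩
    rcases t.eq_zero_or_pos with rfl | ht
    · exact hwb
    · exact hbw t ht
  have hly : max l y < g^[t + 1] w := by rw [iterate_succ_apply']; exact hab hband
  have htn' : t + 1 ≠ n := by
    rintro rfl
    exact (le_max_right l y).not_gt (hwy ▸ hly)
  refine ⟨g^[t + 1] w, ⟨(le_max_left l y).trans_lt hly,
    (not_lt.1 hta).trans (max_le hac.le (max_le hl.le hyc.le))⟩, n - (t + 1), by omega, ?_⟩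
  rw [← iterate_add_apply, Nat.sub_add_cancel htn, hwy]

end LinearOrder

section ConditionallyCompleteLinearOrder

variable {X : Type*} [ConditionallyCompleteLinearOrder X] [TopologicalSpace X] [OrderTopology X]
  [DenselyOrdered X] {g : X → X} {c y : X}

theorem preimagesAccumulateAt_Icc_of_frequently_nhdsLE (hg : Continuous g) (hc : IsFixedPt g c)
    (hyc : y < c) (h : ∃ᶠ w in 𝓝[≤] c, w ∈ strictBackwardOrbit g y) :
    PreimagesAccumulateAt g (Icc y c) c := by
  intro v hv
  refine Frequently.filter_mono ?_ (nhdsWithin_le_nhds (s := Iic c))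
  rw [(nhdsLE_basis_of_exists_lt ⟨y, hyc⟩).frequently_iff] at h ⊢
  intro l hl
  obtain ⟨w, ⟨hlw, hwc⟩, m, hm, hwy⟩ := h (max l y) (max_lt hl hyc)
  obtain ⟨hlw, hyw⟩ := max_lt_iff.1 hlw
  obtain ⟨z, hz, rfl⟩ := intermediate_value_Icc hwc (hg.iterate m).continuousOn
    (by rwa [hwy, iterate_fixed hc])
  exact ⟨z, ⟨hlw.trans_le hz.1, hz.2⟩, ⟨hyw.le.trans hz.1, hz.2⟩, m, hm, rfl⟩

theorem preimagesAccumulateAt_Icc_of_frequently_nhdsGE {H : X} (hg : Continuous g)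
    (hc : IsFixedPt g c) (hyc : y < c) (hcH : c < H)
    (h : ∃ᶠ w in 𝓝[≥] c, w ∈ strictBackwardOrbit g y)
    (hH : ∃ᶠ z in 𝓝[≥] c, ∃ m, 0 < m ∧ H ≤ g^[m] z) :
    PreimagesAccumulateAt g (Icc y H) c := by
  intro v hv
  refine Frequently.filter_mono ?_ (nhdsWithin_le_nhds (s := Ici c))
  rw [(nhdsGE_basis_of_exists_gt ⟨H, hcH⟩).frequently_iff] at h hH ⊢
  intro e he
  have hsub : ∀ {w z}, w ∈ Ico c (min e H) → z ∈ Icc c w →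
      z ∈ Ico c e ∧ z ∈ Icc y H :=
    fun hw hz => ⟨⟨hz.1, hz.2.trans_lt (hw.2.trans_le (min_le_left _ _))⟩,
      hyc.le.trans hz.1, hz.2.trans (hw.2.trans_le (min_le_right _ _)).le⟩
  rcases le_or_gt v c with hvc | hcv
  · obtain ⟨w, hw, m, hm, hwy⟩ := h _ (lt_min he hcH)
    obtain ⟨z, hz, rfl⟩ := intermediate_value_Icc' hw.1 (hg.iterate m).continuousOn
      (by rw [hwy, iterate_fixed hc]; exact ⟨hv.1, hvc⟩)
    exact ⟨z, (hsub hw hz).1, (hsub hw hz).2, m, hm, rfl⟩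
  · obtain ⟨w, hw, m, hm, hHw⟩ := hH _ (lt_min he hcH)
    obtain ⟨z, hz, rfl⟩ := intermediate_value_Icc hw.1 (hg.iterate m).continuousOn
      (by rw [iterate_fixed hc]; exact ⟨hcv.le, hv.2.trans hHw⟩)
    exact ⟨z, (hsub hw hz).1, (hsub hw hz).2, m, hm, rfl⟩

theorem exists_preimagesAccumulateAt_of_lt (hg : Continuous g) (hc : IsFixedPt g c)
    (hyc : y < c) (h : c ∈ closure (strictBackwardOrbit g y)) :
    ∃ K, y ∈ K ∧ PreimagesAccumulateAt g K c := by
  rw [mem_closure_iff_frequently, ← nhdsLE_sup_nhdsGE, frequently_sup] at h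
  rcases h with hle | hge
  · exact ⟨Icc y c, ⟨le_rfl, hyc.le⟩,
      preimagesAccumulateAt_Icc_of_frequently_nhdsLE hg hc hyc hle⟩
  by_cases hH : ∃ H, c < H ∧ ∃ᶠ z in 𝓝[≥] c, ∃ m, 0 < m ∧ H ≤ g^[m] z
  · obtain ⟨H, hcH, hH⟩ := hH
    exact ⟨Icc y H, ⟨le_rfl, hyc.le.trans hcH.le⟩,
      preimagesAccumulateAt_Icc_of_frequently_nhdsGE hg hc hyc hcH hge hH⟩
  · simp only [not_exists, not_and, not_frequently, not_le] at hH
    exact ⟨Icc y c, ⟨le_rfl, hyc.le⟩, preimagesAccumulateAt_Icc_of_frequently_nhdsLE hg hc hyc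
      (frequently_nhdsLE_of_frequently_nhdsGE hg hc hyc hge hH)⟩

theorem exists_preimagesAccumulateAt (hg : Continuous g) (hc : IsFixedPt g c)
    (h : c ∈ closure (strictBackwardOrbit g y)) :
    ∃ K, y ∈ K ∧ PreimagesAccumulateAt g K c := by
  rcases lt_trichotomy y c with hyc | rfl | hcy
  · exact exists_preimagesAccumulateAt_of_lt hg hc hyc h
  · refine ⟨{y}, rfl, fun v hv =>
      (frequently_pure.2 ⟨rfl, 1, one_pos, ?_⟩).filter_mono (pure_le_nhds y)⟩
    rw [mem_singleton_iff.1 hv, iterate_one]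
    exact hc
  · exact exists_preimagesAccumulateAt_of_lt (X := Xᵒᵈ) hg hc hcy h

end ConditionallyCompleteLinearOrder

theorem stmt9 (f : unitInterval → unitInterval) (hf : Continuous f)
    (y p : unitInterval) (k : ℕ) (hk : 1 ≤ k) (hp : f^[k] p = p)
    (hmeet : ∃ i : ℕ, f^[i] p ∈ alphaLimit f y) :
    ∀ i : ℕ, f^[i] p ∈ sAlpha f y := by
  obtain ⟨i₀, hi₀⟩ := hmeet
  obtain ⟨r, hr⟩ := exists_iterate_mem_closure_strictBackwardOrbit hf hk hi₀
  rw [← iterate_add_apply] at hr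
  set s := r + i₀
  have hper : IsPeriodicPt f k p := hp
  obtain ⟨K, hyK, hK⟩ := exists_preimagesAccumulateAt (hf.iterate k) (hper.apply_iterate s) hr
  have hs : f^[s] p ∈ sAlpha f y := (hK.of_iterate hk).mem_sAlpha hyK
  intro i
  have hi : f^[i + k * s - s] (f^[s] p) = f^[i] p := by
    rw [← iterate_add_apply, Nat.sub_add_cancel (le_add_left (Nat.le_mul_of_pos_left s hk)),
      iterate_add_apply, (hper.mul_const s).eq]
  exact hi ▸ (sAlpha_mapsTo hf y).iterate _ hs
end

section
/- Let X be a compact metric space and f : X → X continuous and surjective. For every x ∈ X the β-limit set β(x), defined as the closure of sα(x), is nonempty, closed, and strongly invariant: f(β(x)) = β(x). -/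
/-!
A backward branch exists by surjectivity, and compactness gives it a cluster point, so `sα(x)` is
nonempty. If `y` is a cluster point of a branch `u`, then `f y` is a cluster point of `f ∘ u`,
which is `u` shifted by one; hence `f (sα(x)) ⊆ sα(x)`. Conversely, take an ultrafilter of times
along which `u` tends to `y`; along it the shifted branch `n ↦ u (n + 1)` tends to some `z`, which
lies in `sα(x)`, and `f z = y` by uniqueness of limits. Finally `f` is a closed map, so it commutes
with taking closures.
-/

open Filter Topology Set

theorem mapClusterPt_atTop_comp_succ_iff {X : Type*} [TopologicalSpace X] {u : ℕ → X} {y : X} :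
    MapClusterPt y atTop (fun n => u (n + 1)) ↔ MapClusterPt y atTop u := by
  change MapClusterPt y atTop (u ∘ (· + 1)) ↔ _
  rw [mapClusterPt_comp, map_add_atTop_eq_nat]

section BackwardBranch

variable {X : Type*} {f : X → X} {x : X} {u : ℕ → X}

theorem exists_isBackwardBranch (hf : Function.Surjective f) (x : X) :
    ∃ u, IsBackwardBranch f x u :=
  ⟨fun n => Nat.rec x (fun _ z => Function.surjInv hf z) n, rfl,
    fun _ => Function.surjInv_eq hf _⟩

theorem IsBackwardBranch.comp_succ (hu : IsBackwardBranch f x u) :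
    f ∘ (fun n => u (n + 1)) = u :=
  funext hu.2

end BackwardBranch

section SpecialAlphaLimit

variable {X : Type*} [TopologicalSpace X] {f : X → X}

theorem sAlpha_nonempty [CompactSpace X] (hf : Function.Surjective f) (x : X) :
    (sAlpha f x).Nonempty := by
  obtain ⟨u, hu⟩ := exists_isBackwardBranch hf x
  obtain ⟨y, hy⟩ := exists_clusterPt_of_compactSpace (map u atTop)
  exact ⟨y, u, hu, hy⟩

theorem image_sAlpha_subset (hf : Continuous f) (x : X) : f '' sAlpha f x ⊆ sAlpha f x := by
  rintro _ ⟨y, ⟨u, hu, hy⟩, rfl⟩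
  have hfy : MapClusterPt (f y) atTop (f ∘ u) := hy.continuousAt_comp hf.continuousAt
  refine ⟨u, hu, ?_⟩
  rw [← hu.comp_succ]
  exact mapClusterPt_atTop_comp_succ_iff.2 hfy

theorem sAlpha_subset_image [CompactSpace X] [T2Space X] (hf : Continuous f) (x : X) :
    sAlpha f x ⊆ f '' sAlpha f x := by
  rintro y ⟨u, hu, hy⟩
  obtain ⟨U, hU, huy⟩ := mapClusterPt_iff_ultrafilter.1 hy
  set z := (U.map fun n => u (n + 1)).lim
  have hz : Tendsto (fun n => u (n + 1)) U (𝓝 z) := Ultrafilter.le_nhds_lim _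
  have hz_mem : z ∈ sAlpha f x :=
    ⟨u, hu, mapClusterPt_atTop_comp_succ_iff.1 (hz.mapClusterPt.mono hU)⟩
  have hfz : Tendsto u U (𝓝 (f z)) := hu.comp_succ ▸ (hf.tendsto z).comp hz
  exact ⟨z, hz_mem, tendsto_nhds_unique hfz huy⟩

theorem image_sAlpha [CompactSpace X] [T2Space X] (hf : Continuous f) (x : X) :
    f '' sAlpha f x = sAlpha f x :=
  (image_sAlpha_subset hf x).antisymm (sAlpha_subset_image hf x)

theorem image_closure_sAlpha [CompactSpace X] [T2Space X] (hf : Continuous f) (x : X) :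
    f '' closure (sAlpha f x) = closure (sAlpha f x) := by
  rw [← hf.isClosedMap.closure_image_eq_of_continuous hf, image_sAlpha hf]

end SpecialAlphaLimit

theorem stmt10 {X : Type*} [MetricSpace X] [CompactSpace X] (f : X → X)
    (hf : Continuous f) (hsurj : Function.Surjective f) (x : X) :
    (closure (sAlpha f x)).Nonempty ∧ IsClosed (closure (sAlpha f x)) ∧
    f '' closure (sAlpha f x) = closure (sAlpha f x) :=
  ⟨(sAlpha_nonempty hsurj x).closure, isClosed_closure, image_closure_sAlpha hf x⟩
end

section
/- Define f : [0,5] → [0,5] as the piecewise linear map with f(0) = 1, f(1) = 5, f(4) = 2, f(5) = 0, linear on each of [0,1], [1,4], [4,5]. Then sα(0) contains the period-three orbit {0,1,5} and the period-two orbit {2,4}, but does not contain the fixed point 3. -/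
open Filter Topology Set

/-!
`0 ↦ 1 ↦ 5 ↦ 0` is a 3-cycle, and a periodic point lies in its own special α-limit set, while
`sα(y) ⊆ sα(f y)`; so the whole cycle lies in `sα(0)`. On `[1, 2]` the second iterate is
`y ↦ 2y - 2`, which expands away from its fixed point `2`; inverting it from `0` (resp. from `5`,
one step further) gives backward branches of `f^[2]` converging to `2` (resp. `4`), and a backward
branch of `f^[p]` refines to one of `f`. Finally `f y = 6 - y` maps `(5/2, 7/2)` into itself, so no
backward branch of `0` ever enters this neighbourhood of `3`.
-/

open Function

section General

variable {X : Type*} [TopologicalSpace X] {f : X → X} {x y : X}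

theorem mem_sAlpha_of_isFixedPt (hx : IsFixedPt f x) : x ∈ sAlpha f x :=
  ⟨fun _ => x, ⟨rfl, fun _ => hx⟩, tendsto_const_nhds.mapClusterPt⟩

theorem sAlpha_subset_of_apply_eq (h : f y = x) : sAlpha f y ⊆ sAlpha f x := by
  rintro z ⟨u, ⟨rfl, hu⟩, hz⟩
  refine ⟨fun | 0 => x | n + 1 => u n, ⟨rfl, ?_⟩,
    hz.of_comp (φ := (· + 1)) (tendsto_add_atTop_nat 1)⟩
  rintro (_ | n)
  exacts [h, hu n]

theorem sAlpha_iterate_subset {p : ℕ} (hp : 0 < p) : sAlpha f^[p] x ⊆ sAlpha f x := by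
  rintro z ⟨w, ⟨hw0, hw⟩, hz⟩
  set u : ℕ → X := fun n => f^[p - n % p] (w (n / p + 1))
  have hu : u ∘ (p * ·) = w := by
    ext m
    simp [u, Nat.mul_div_cancel_left m hp, hw]
  refine ⟨u, ⟨by simp [u, hw, hw0], fun n => ?_⟩,
    .of_comp (tendsto_id.const_mul_atTop' hp) (hu ▸ hz)⟩
  obtain ⟨hn, hr⟩ : n % p + p * (n / p) = n ∧ n % p < p := (Nat.div_mod_unique hp).1 ⟨rfl, rfl⟩
  by_cases hlast : n % p + 1 = p
  · obtain ⟨hq, hr'⟩ : (n + 1) / p = n / p + 1 ∧ (n + 1) % p = 0 :=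
      (Nat.div_mod_unique hp).2 ⟨by rw [mul_add]; omega, hp⟩
    simp only [u, hq, hr', Nat.sub_zero, hw, show p - n % p = 1 by omega, iterate_one]
  · obtain ⟨hq, hr'⟩ : (n + 1) / p = n / p ∧ (n + 1) % p = n % p + 1 :=
      (Nat.div_mod_unique hp).2 ⟨by omega, by omega⟩
    simp only [u, hq, hr', ← iterate_succ_apply' f]
    congr 2
    omega

theorem mem_sAlpha_of_isPeriodicPt {p : ℕ} (hp : 0 < p) (hx : IsPeriodicPt f p x) :
    x ∈ sAlpha f x :=
  sAlpha_iterate_subset hp (mem_sAlpha_of_isFixedPt hx)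

theorem notMem_sAlpha_of_mapsTo {U : Set X} (hU : IsOpen U) (hfU : MapsTo f U U) (hx : x ∉ U)
    (hy : y ∈ U) : y ∉ sAlpha f x := by
  rintro ⟨u, ⟨rfl, hu⟩, hcl⟩
  have hout : ∀ n, u n ∉ U := by
    intro n
    induction n with
    | zero => exact hx
    | succ n ih => exact fun h => ih (hu n ▸ hfU h)
  obtain ⟨n, hn⟩ := (mapClusterPt_iff_frequently.1 hcl U (hU.mem_nhds hy)).exists
  exact hout n hn

end General

section PiecewiseLinear

variable {f : Icc (0:ℝ) 5 → Icc (0:ℝ) 5}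

theorem half_pow_mem_Icc (m : ℕ) : (1 / 2 : ℝ) ^ m ∈ Icc (0:ℝ) 1 :=
  ⟨by positivity, pow_le_one₀ (by norm_num) (by norm_num)⟩

noncomputable def towardTwo (m : ℕ) : Icc (0:ℝ) 5 :=
  ⟨2 - 2 * (1 / 2) ^ m, by have := half_pow_mem_Icc m; constructor <;> linarith [this.1, this.2]⟩

noncomputable def towardFour (m : ℕ) : Icc (0:ℝ) 5 :=
  ⟨4 + (1 / 2) ^ m, by have := half_pow_mem_Icc m; constructor <;> linarith [this.1, this.2]⟩

theorem apply_towardTwo_succ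
    (hf2 : ∀ x : Icc (0:ℝ) 5, 1 ≤ (x : ℝ) → (x : ℝ) ≤ 4 → (f x : ℝ) = 6 - x) (m : ℕ) :
    f (towardTwo (m + 1)) = towardFour m := by
  have := half_pow_mem_Icc m
  ext
  rw [hf2 _ (by simp only [towardTwo, pow_succ]; linarith [this.1, this.2])
    (by simp only [towardTwo, pow_succ]; linarith [this.1, this.2])]
  simp only [towardTwo, towardFour, pow_succ]
  ring

theorem apply_towardFour (hf3 : ∀ x : Icc (0:ℝ) 5, 4 ≤ (x : ℝ) → (f x : ℝ) = 10 - 2 * x)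
    (m : ℕ) : f (towardFour m) = towardTwo m := by
  ext
  rw [hf3 _ (by simp only [towardFour]; linarith [(half_pow_mem_Icc m).1])]
  simp only [towardTwo, towardFour]
  ring

theorem isBackwardBranch_towardTwo
    (hf2 : ∀ x : Icc (0:ℝ) 5, 1 ≤ (x : ℝ) → (x : ℝ) ≤ 4 → (f x : ℝ) = 6 - x)
    (hf3 : ∀ x : Icc (0:ℝ) 5, 4 ≤ (x : ℝ) → (f x : ℝ) = 10 - 2 * x) :
    IsBackwardBranch f^[2] ⟨0, by norm_num⟩ towardTwo :=
  ⟨by ext; simp [towardTwo], fun m => by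
    rw [iterate_succ_apply', iterate_one, apply_towardTwo_succ hf2, apply_towardFour hf3]⟩

theorem isBackwardBranch_towardFour
    (hf2 : ∀ x : Icc (0:ℝ) 5, 1 ≤ (x : ℝ) → (x : ℝ) ≤ 4 → (f x : ℝ) = 6 - x)
    (hf3 : ∀ x : Icc (0:ℝ) 5, 4 ≤ (x : ℝ) → (f x : ℝ) = 10 - 2 * x) :
    IsBackwardBranch f^[2] ⟨5, by norm_num⟩ towardFour :=
  ⟨by ext; norm_num [towardFour], fun m => by
    rw [iterate_succ_apply', iterate_one, apply_towardFour hf3, apply_towardTwo_succ hf2]⟩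

theorem mapsTo_near_three
    (hf2 : ∀ x : Icc (0:ℝ) 5, 1 ≤ (x : ℝ) → (x : ℝ) ≤ 4 → (f x : ℝ) = 6 - x) :
    MapsTo f (Subtype.val ⁻¹' Ioo (5 / 2) (7 / 2)) (Subtype.val ⁻¹' Ioo (5 / 2) (7 / 2)) := by
  rintro x ⟨hl, hr⟩
  simp only [mem_preimage, mem_Ioo, hf2 x (by linarith) (by linarith)]
  constructor <;> linarith

theorem tendsto_towardTwo : Tendsto towardTwo atTop (𝓝 ⟨2, by norm_num⟩) := by
  rw [tendsto_subtype_rng]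
  have := tendsto_pow_atTop_nhds_zero_of_lt_one (r := (1 / 2 : ℝ)) (by norm_num) (by norm_num)
  simpa [towardTwo] using (this.const_mul 2).const_sub 2

theorem tendsto_towardFour : Tendsto towardFour atTop (𝓝 ⟨4, by norm_num⟩) := by
  rw [tendsto_subtype_rng]
  have := tendsto_pow_atTop_nhds_zero_of_lt_one (r := (1 / 2 : ℝ)) (by norm_num) (by norm_num)
  simpa [towardFour] using this.const_add 4

end PiecewiseLinear

theorem stmt12 (f : Set.Icc (0:ℝ) 5 → Set.Icc (0:ℝ) 5)
    (hf1 : ∀ x : Set.Icc (0:ℝ) 5, (x : ℝ) ≤ 1 → (f x : ℝ) = 1 + 4 * x)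
    (hf2 : ∀ x : Set.Icc (0:ℝ) 5, 1 ≤ (x : ℝ) → (x : ℝ) ≤ 4 → (f x : ℝ) = 6 - x)
    (hf3 : ∀ x : Set.Icc (0:ℝ) 5, 4 ≤ (x : ℝ) → (f x : ℝ) = 10 - 2 * x) :
    (⟨0, by norm_num⟩ : Set.Icc (0:ℝ) 5) ∈ sAlpha f ⟨0, by norm_num⟩ ∧
    (⟨1, by norm_num⟩ : Set.Icc (0:ℝ) 5) ∈ sAlpha f ⟨0, by norm_num⟩ ∧
    (⟨5, by norm_num⟩ : Set.Icc (0:ℝ) 5) ∈ sAlpha f ⟨0, by norm_num⟩ ∧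
    (⟨2, by norm_num⟩ : Set.Icc (0:ℝ) 5) ∈ sAlpha f ⟨0, by norm_num⟩ ∧
    (⟨4, by norm_num⟩ : Set.Icc (0:ℝ) 5) ∈ sAlpha f ⟨0, by norm_num⟩ ∧
    (⟨3, by norm_num⟩ : Set.Icc (0:ℝ) 5) ∉ sAlpha f ⟨0, by norm_num⟩ := by
  have h01 : f ⟨0, by norm_num⟩ = ⟨1, by norm_num⟩ := by ext; rw [hf1 _ (by norm_num)]; norm_num
  have h15 : f ⟨1, by norm_num⟩ = ⟨5, by norm_num⟩ := by ext; rw [hf1 _ (by norm_num)]; norm_num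
  have h50 : f ⟨5, by norm_num⟩ = ⟨0, by norm_num⟩ := by ext; rw [hf3 _ (by norm_num)]; norm_num
  have h5 : sAlpha f ⟨5, _⟩ ⊆ sAlpha f ⟨0, _⟩ := sAlpha_subset_of_apply_eq h50
  have h1 : sAlpha f ⟨1, _⟩ ⊆ sAlpha f ⟨0, _⟩ := (sAlpha_subset_of_apply_eq h15).trans h5
  obtain ⟨hc0, hc1, hc5⟩ : IsPeriodicPt f 3 ⟨0, by norm_num⟩ ∧ IsPeriodicPt f 3 ⟨1, by norm_num⟩ ∧
      IsPeriodicPt f 3 ⟨5, by norm_num⟩ := by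
    simp [IsPeriodicPt, IsFixedPt, h01, h15, h50]
  exact ⟨mem_sAlpha_of_isPeriodicPt three_pos hc0,
    h1 (mem_sAlpha_of_isPeriodicPt three_pos hc1),
    h5 (mem_sAlpha_of_isPeriodicPt three_pos hc5),
    sAlpha_iterate_subset two_pos
      ⟨towardTwo, isBackwardBranch_towardTwo hf2 hf3, tendsto_towardTwo.mapClusterPt⟩,
    h5 (sAlpha_iterate_subset two_pos
      ⟨towardFour, isBackwardBranch_towardFour hf2 hf3, tendsto_towardFour.mapClusterPt⟩),
    notMem_sAlpha_of_mapsTo (isOpen_Ioo.preimage continuous_subtype_val) (mapsTo_near_three hf2)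
      (by norm_num) (by norm_num)⟩
end

section
/- Let f : [0,1] → [0,1] be continuous, let Orb(I₀) ⊇ Orb(I₁) ⊇ ⋯ be a nested sequence of cycles of intervals with periods tending to infinity, and let Q = ⋂_n Orb(I_n). If the α-limit set α(y) of a point y intersects Q, then y ∈ Q. -/
open Filter Topology Set

/-!
Let `z ∈ α(y) ∩ Q` and suppose `y ∉ Orb(I_n)`. Since `Orb(I_n)` is forward invariant and
preimages of `y` accumulate at `z`, no point `f^t(z)` lies in the interior of `Orb(I_n)`.
The points `z, f^k(z), f^{2k}(z)` (with `k` the period of `Orb(I_n)`) all lie in the same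
interval of the cycle, hence are endpoints of it, so two of them coincide. But `z` also lies in a
deeper cycle of period `> 2k`, whose intervals separate these three points.
-/

section Iterate

variable {α : Type*} {f : α → α} {K : Set α} {k : ℕ}

theorem image_iterate_mul_eq (hK : f^[k] '' K = K) (q : ℕ) : f^[k * q] '' K = K := by
  rw [Function.iterate_mul, Set.image_iterate_eq, Function.iterate_fixed hK]

theorem iterate_iterate_mem_image_iterate_mod (hK : f^[k] '' K = K) {w : α} (hw : w ∈ K)
    (i t : ℕ) : f^[t] (f^[i] w) ∈ f^[(i + t) % k] '' K := by
  have hsplit : t + i = (i + t) % k + k * ((i + t) / k) := by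
    have := Nat.mod_add_div (i + t) k
    omega
  rw [← Function.iterate_add_apply, hsplit, Function.iterate_add_apply]
  exact mem_image_of_mem _ (image_iterate_mul_eq hK _ ▸ mem_image_of_mem _ hw)

theorem iterate_iterate_ne_of_disjoint (hk : 0 < k)
    (hdisj : ∀ i j, i < k → j < k → i ≠ j → Disjoint (f^[i] '' K) (f^[j] '' K))
    (hK : f^[k] '' K = K) {w : α} (hw : w ∈ K) (i : ℕ) {p q : ℕ} (hpq : p < q)
    (hqp : q - p < k) : f^[p] (f^[i] w) ≠ f^[q] (f^[i] w) := by
  intro heq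
  have hmod : (i + p) % k ≠ (i + q) % k := by
    intro h
    have hdvd : k ∣ q - p := by
      simpa [show i + q - (i + p) = q - p by omega] using (Nat.modEq_iff_dvd' (by omega)).mp h
    have := Nat.le_of_dvd (by omega) hdvd
    omega
  refine disjoint_left.mp (hdisj _ _ (Nat.mod_lt _ hk) (Nat.mod_lt _ hk) hmod) ?_
    (iterate_iterate_mem_image_iterate_mod hK hw i q)
  exact heq ▸ iterate_iterate_mem_image_iterate_mod hK hw i p

end Iterate

section AlphaLimit

variable {X : Type*} [TopologicalSpace X] {f : X → X}

theorem iterate_notMem_interior_of_mem_alphaLimit (hf : Continuous f) {M : Set X}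
    (hM : MapsTo f M M) {y z : X} (hy : y ∉ M) (hz : z ∈ alphaLimit f y) (t : ℕ) :
    f^[t] z ∉ interior M := by
  obtain ⟨u, hu, hclus⟩ := hz
  intro hzM
  have hnhds : f^[t] ⁻¹' interior M ∈ 𝓝 z :=
    (isOpen_interior.preimage (hf.iterate t)).mem_nhds hzM
  obtain ⟨s, hs, hts⟩ :=
    ((mapClusterPt_iff_frequently.mp hclus _ hnhds).and_eventually (eventually_ge_atTop t)).exists
  refine hy ?_
  rw [← hu s, ← Nat.sub_add_cancel hts, Function.iterate_add_apply, Nat.sub_add_cancel hts]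
  exact hM.iterate _ (interior_subset hs)

end AlphaLimit

theorem IsPreconnected.mem_interior_of_mem_Ioo {X : Type*} [ConditionallyCompleteLinearOrder X]
    [TopologicalSpace X] [OrderTopology X] [DenselyOrdered X] {J : Set X} (hJ : IsPreconnected J)
    {a b x : X} (ha : a ∈ J) (hb : b ∈ J) (hx : x ∈ Ioo a b) : x ∈ interior J :=
  interior_mono (Ioo_subset_Icc_self.trans (hJ.ordConnected.out ha hb))
    (mem_interior_iff_mem_nhds.mpr (isOpen_Ioo.mem_nhds hx))

theorem IsPreconnected.eq_or_eq_or_eq_of_notMem_interior {X : Type*}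
    [ConditionallyCompleteLinearOrder X] [TopologicalSpace X] [OrderTopology X] [DenselyOrdered X]
    {J : Set X} (hJ : IsPreconnected J) {a b c : X} (ha : a ∈ J \ interior J)
    (hb : b ∈ J \ interior J) (hc : c ∈ J \ interior J) : a = b ∨ a = c ∨ b = c := by
  by_contra! hne
  obtain ⟨hab, hac, hbc⟩ := hne
  rcases hab.lt_or_gt with h₁ | h₁ <;> rcases hac.lt_or_gt with h₂ | h₂ <;>
    rcases hbc.lt_or_gt with h₃ | h₃
  all_goals first
    | exact hb.2 (hJ.mem_interior_of_mem_Ioo ha.1 hc.1 ⟨‹_›, ‹_›⟩)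
    | exact hb.2 (hJ.mem_interior_of_mem_Ioo hc.1 ha.1 ⟨‹_›, ‹_›⟩)
    | exact hc.2 (hJ.mem_interior_of_mem_Ioo ha.1 hb.1 ⟨‹_›, ‹_›⟩)
    | exact hc.2 (hJ.mem_interior_of_mem_Ioo hb.1 ha.1 ⟨‹_›, ‹_›⟩)
    | exact ha.2 (hJ.mem_interior_of_mem_Ioo hb.1 hc.1 ⟨‹_›, ‹_›⟩)
    | exact ha.2 (hJ.mem_interior_of_mem_Ioo hc.1 hb.1 ⟨‹_›, ‹_›⟩)

namespace IsIntervalCycle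

variable {f : unitInterval → unitInterval} {M : Set unitInterval} {k : ℕ}

theorem mapsTo (h : IsIntervalCycle f M k) : MapsTo f M M := by
  obtain ⟨hk, K, -, -, hK, rfl⟩ := h
  intro x hx
  obtain ⟨i, -, w, hw, rfl⟩ := mem_iUnion₂.mp hx
  exact mem_iUnion₂.mpr ⟨_, Finset.mem_range.mpr (Nat.mod_lt _ hk),
    iterate_iterate_mem_image_iterate_mod hK hw i 1⟩

theorem iterate_ne (h : IsIntervalCycle f M k) {z : unitInterval} (hz : z ∈ M) {p q : ℕ}
    (hpq : p < q) (hqp : q - p < k) : f^[p] z ≠ f^[q] z := by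
  obtain ⟨hk, K, -, hdisj, hK, rfl⟩ := h
  obtain ⟨i, -, w, hw, rfl⟩ := mem_iUnion₂.mp hz
  exact iterate_iterate_ne_of_disjoint hk hdisj hK hw i hpq hqp

theorem exists_isPreconnected_iterate_mul_mem (hf : Continuous f) (h : IsIntervalCycle f M k)
    {z : unitInterval} (hz : z ∈ M) : ∃ J ⊆ M, IsPreconnected J ∧ ∀ a, f^[a * k] z ∈ J := by
  obtain ⟨-, K, ⟨a, b, -, rfl⟩, -, hK, rfl⟩ := h
  obtain ⟨i, hi, w, hw, rfl⟩ := mem_iUnion₂.mp hz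
  refine ⟨f^[i] '' Icc a b, subset_biUnion_of_mem (u := fun i ↦ f^[i] '' Icc a b) hi,
    isPreconnected_Icc.image _ (hf.iterate i).continuousOn, fun n ↦ ?_⟩
  have hmem := iterate_iterate_mem_image_iterate_mod hK hw i (n * k)
  rwa [Nat.add_mul_mod_self_right, Nat.mod_eq_of_lt (Finset.mem_range.mp hi)] at hmem

end IsIntervalCycle

theorem stmt17_general (f : unitInterval → unitInterval) (hf : Continuous f)
    (M : ℕ → Set unitInterval) (k : ℕ → ℕ)
    (hM : ∀ n, IsIntervalCycle f (M n) (k n))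
    (hper : Tendsto k atTop atTop)
    (y : unitInterval) (hmeet : (alphaLimit f y ∩ ⋂ n, M n).Nonempty) :
    y ∈ ⋂ n, M n := by
  obtain ⟨z, hzα, hzQ⟩ := hmeet
  rw [mem_iInter] at hzQ ⊢
  intro n
  by_contra hy
  obtain ⟨J, hJM, hJ, hzJ⟩ := (hM n).exists_isPreconnected_iterate_mul_mem hf (hzQ n)
  have hboundary (a : ℕ) : f^[a * k n] z ∈ J \ interior J :=
    ⟨hzJ a, fun hint ↦ iterate_notMem_interior_of_mem_alphaLimit hf (hM n).mapsTo hy hzα _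
      (interior_mono hJM hint)⟩
  obtain ⟨m, hm⟩ := (hper.eventually_gt_atTop (2 * k n)).exists
  have hne {p q : ℕ} (hpq : p < q) (hq : q ≤ 2) : f^[p * k n] z ≠ f^[q * k n] z :=
    (hM m).iterate_ne (hzQ m) (Nat.mul_lt_mul_of_pos_right hpq (hM n).1)
      (by rw [← Nat.sub_mul]; linarith [Nat.mul_le_mul_right (k n) (by omega : q - p ≤ 2)])
  rcases hJ.eq_or_eq_or_eq_of_notMem_interior (hboundary 0) (hboundary 1) (hboundary 2)
    with h | h | h
  exacts [hne zero_lt_one one_le_two h, hne zero_lt_two le_rfl h, hne one_lt_two le_rfl h]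

theorem stmt17 (f : unitInterval → unitInterval) (hf : Continuous f)
    (M : ℕ → Set unitInterval) (k : ℕ → ℕ)
    (hM : ∀ n, IsIntervalCycle f (M n) (k n))
    (hnest : ∀ n, M (n + 1) ⊆ M n)
    (hper : Tendsto k atTop atTop)
    (y : unitInterval) (hmeet : (alphaLimit f y ∩ ⋂ n, M n).Nonempty) :
    y ∈ ⋂ n, M n :=
  stmt17_general f hf M k hM hper y hmeet
end
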